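/- arXiv:0802.0271 — 11 statements merged into one kernel-verified Lean document; each statement's English description precedes it below -/
import Mathlib

section
/- For every integer k with 1 ≤ k ≤ d+e-1, the set I_k contains either one or two pairs. -/
/-- The set `I_k = {(m,n) : m+n+1 = k, -1/e ≤ m/e - n/d ≤ 1/d, 0 ≤ m < e, 0 ≤ n < d}`. -/
def Ik (d e : ℕ) (k : ℤ) : Set (ℤ × ℤ) :=
  {q | q.1 + q.2 + 1 = k ∧
    -(1 : ℚ) / e ≤ (q.1 : ℚ) / e - (q.2 : ℚ) / d ∧
    (q.1 : ℚ) / e - (q.2 : ℚ) / d ≤ 1 / d ∧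
    0 ≤ q.1 ∧ q.1 < e ∧ 0 ≤ q.2 ∧ q.2 < d}

lemma div_cond (d e : ℚ) (hd : 0 < d) (he : 0 < e) (m n : ℚ) :
    (-1/e ≤ m/e - n/d ∧ m/e - n/d ≤ 1/d) ↔ (-d ≤ d*m - e*n ∧ d*m - e*n ≤ e) := by
  rw [div_sub_div _ _ he.ne' hd.ne', div_le_div_iff₀ he (by positivity),
    div_le_div_iff₀ (by positivity) hd]
  constructor <;> rintro ⟨h1, h2⟩ <;> constructor <;> nlinarith

lemma mem_Ik (d e : ℕ) (hd : 0 < d) (he : 0 < e) (k : ℤ)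
    (hk1 : 1 ≤ k) (hk2 : k ≤ (d : ℤ) + e - 1) (q : ℤ × ℤ) :
    q ∈ Ik d e k ↔ q.2 = k - 1 - q.1 ∧
      (e : ℤ) * k - ((d : ℤ) + e) ≤ ((d : ℤ) + e) * q.1 ∧ ((d : ℤ) + e) * q.1 ≤ e * k := by
  obtain ⟨m, n⟩ := q
  simp only [Ik, Set.mem_setOf_eq]
  have hd0 : (0 : ℚ) < d := by exact_mod_cast hd
  have he0 : (0 : ℚ) < e := by exact_mod_cast he
  have hdZ : (1 : ℤ) ≤ d := by exact_mod_cast hd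
  have heZ : (1 : ℤ) ≤ e := by exact_mod_cast he
  constructor
  · rintro ⟨h1, h2, h3, -, -, -, -⟩
    have hn : (n : ℚ) = k - 1 - m := by exact_mod_cast (by omega : n = k - 1 - m)
    obtain ⟨g1, g2⟩ := (div_cond d e hd0 he0 m n).mp ⟨h2, h3⟩
    rw [hn] at g1 g2
    refine ⟨by omega, ?_, ?_⟩ <;> [exact_mod_cast (by linarith : ((e:ℚ)*k - (d+e) ≤ (d+e)*m));
      exact_mod_cast (by linarith : ((d:ℚ)+e)*m ≤ e*k)]
  · rintro ⟨h1, h2, h3⟩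
    have hek : (e : ℤ) ≤ e * k := le_mul_of_one_le_right (by omega) hk1
    have hek2 : (e : ℤ) * k ≤ e * ((d:ℤ) + e - 1) := mul_le_mul_of_nonneg_left hk2 (by omega)
    have hm0 : 0 ≤ m := by nlinarith
    have hme : m < e := by nlinarith
    have hdk : ((d:ℤ)) * k ≥ d := le_mul_of_one_le_right (by omega) hk1
    have hdk2 : ((d:ℤ)) * k ≤ d * ((d:ℤ) + e - 1) := mul_le_mul_of_nonneg_left hk2 (by omega)
    have hn0 : 0 ≤ n := by nlinarith
    have hnd : n < d := by nlinarith
    have hn : (n : ℚ) = k - 1 - m := by exact_mod_cast (by omega : n = k - 1 - m)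
    have g1 : (-(d:ℚ)) ≤ d*m - e*n := by
      rw [hn]
      have : ((e:ℚ)*k - (d+e) ≤ (d+e)*m) := by exact_mod_cast h2
      ring_nf; ring_nf at this; linarith
    have g2 : (d:ℚ)*m - e*n ≤ e := by
      rw [hn]
      have : (((d:ℚ)+e)*m ≤ e*k) := by exact_mod_cast h3
      ring_nf; ring_nf at this; linarith
    obtain ⟨c1, c2⟩ := (div_cond d e hd0 he0 m n).mpr ⟨g1, g2⟩
    exact ⟨by omega, c1, c2, hm0, hme, hn0, hnd⟩

/-- For every `1 ≤ k ≤ d + e - 1`, the set `I_k` contains either one or two pairs. -/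
theorem stmt0 (d e : ℕ) (hd : 0 < d) (he : 0 < e) (k : ℤ)
    (hk1 : 1 ≤ k) (hk2 : k ≤ (d : ℤ) + e - 1) :
    (Ik d e k).ncard = 1 ∨ (Ik d e k).ncard = 2 := by
  have hs : (0 : ℤ) < (d : ℤ) + e := by
    have h1 : (1:ℤ) ≤ d := by exact_mod_cast hd
    have h2 : (1:ℤ) ≤ e := by exact_mod_cast he
    omega
  have hdm := Int.mul_ediv_add_emod ((e : ℤ) * k) ((d : ℤ) + e)
  have hr0 := Int.emod_nonneg ((e : ℤ) * k) hs.ne'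
  have hr1 := Int.emod_lt_of_pos ((e : ℤ) * k) hs
  set m0 : ℤ := ((e : ℤ) * k) / ((d : ℤ) + e) with hm0_def
  have f1 : ((d : ℤ) + e) * m0 ≤ e * k := by linarith
  have f2 : (e : ℤ) * k < ((d : ℤ) + e) * m0 + ((d : ℤ) + e) := by linarith
  have hne : (m0, k - 1 - m0) ∈ Ik d e k :=
    (mem_Ik d e hd he k hk1 hk2 _).mpr ⟨rfl, by simpa using f2.le.trans (by linarith), by simpa using f1⟩
  have hsub : Ik d e k ⊆ {(m0, k - 1 - m0), (m0 - 1, k - m0)} := by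
    intro q hq
    obtain ⟨h1, h2, h3⟩ := (mem_Ik d e hd he k hk1 hk2 q).mp hq
    have hq1 : q.1 = m0 ∨ q.1 = m0 - 1 := by
      have hle : q.1 < m0 + 1 := by
        have h : ((d : ℤ) + e) * q.1 < ((d : ℤ) + e) * (m0 + 1) := by linarith
        exact lt_of_mul_lt_mul_left h hs.le
      have hge : m0 < q.1 + 2 := by
        have h : ((d : ℤ) + e) * m0 < ((d : ℤ) + e) * (q.1 + 2) := by linarith
        exact lt_of_mul_lt_mul_left h hs.le
      omega
    rcases hq1 with h | h
    · left; ext <;> simp [h, h1]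
    · right; ext <;> simp [h, h1]
  have hfin : ({(m0, k - 1 - m0), (m0 - 1, k - m0)} : Set (ℤ × ℤ)).Finite :=
    (Set.finite_singleton _).insert _
  have h2 : (Ik d e k).ncard ≤ 2 := by
    refine (Set.ncard_le_ncard hsub hfin).trans ?_
    refine (Set.ncard_insert_le _ _).trans ?_
    simp
  have h1 : 0 < (Ik d e k).ncard := (Set.ncard_pos (hfin.subset hsub)).mpr ⟨_, hne⟩
  omega
end

section
/- If I_k contains exactly one pair (m,n), then the strict inequalities -1/e < m/e - n/d < 1/d hold. -/
/-- If `I_k` contains exactly one pair `(m,n)`, then `-1/e < m/e - n/d < 1/d`. -/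
theorem stmt1 (d e : ℕ) (hd : 0 < d) (he : 0 < e) (k : ℤ)
    (hk1 : 1 ≤ k) (hk2 : k ≤ (d : ℤ) + e - 1) (m n : ℤ)
    (hI : Ik d e k = {(m, n)}) :
    -(1 : ℚ) / e < (m : ℚ) / e - (n : ℚ) / d ∧ (m : ℚ) / e - (n : ℚ) / d < 1 / d := by
  have hmem : ((m, n) : ℤ × ℤ) ∈ Ik d e k := by rw [hI]; rfl
  obtain ⟨hk, hlo, hhi, hm0, hme, hn0, hnd⟩ := hmem
  simp only at hk hlo hhi hm0 hme hn0 hnd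
  have hd' : (0:ℚ) < d := by exact_mod_cast hd
  have he' : (0:ℚ) < e := by exact_mod_cast he
  have hd0 : (d:ℚ) ≠ 0 := hd'.ne'
  have he0 : (e:ℚ) ≠ 0 := he'.ne'
  have hdz : (0:ℤ) < d := by exact_mod_cast hd
  have hez : (0:ℤ) < e := by exact_mod_cast he
  constructor
  · rcases lt_or_eq_of_le hlo with h | h
    · exact h
    · exfalso
      rw [div_sub_div _ _ he0 hd0, div_eq_div_iff he0 (by positivity)] at h
      have hq : ((m:ℚ)+1)*d = (n:ℚ)*e :=
        mul_right_cancel₀ he0 (by linear_combination -h)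
      have hint : (m + 1) * (d:ℤ) = n * e := by exact_mod_cast hq
      have hn1 : 1 ≤ n := by nlinarith
      have hme1 : m + 1 < e := by nlinarith
      have hval : ((m:ℚ)+1)/e - ((n:ℚ)-1)/d = 1/d := by
        rw [div_sub_div _ _ he0 hd0, div_eq_div_iff (by positivity) hd0]
        linear_combination (d:ℚ) * hq
      have hmem2 : ((m + 1, n - 1) : ℤ × ℤ) ∈ Ik d e k := by
        refine ⟨by simp; omega, ?_, ?_, by simp; omega, ?_, by simp; omega, ?_⟩
        · show -(1:ℚ)/e ≤ ((m+1 : ℤ):ℚ)/e - ((n-1 : ℤ):ℚ)/d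
          push_cast
          rw [hval]
          rw [neg_div]
          have h1 : (0:ℚ) < 1/d := by positivity
          have h2 : (0:ℚ) ≤ 1/e := by positivity
          linarith
        · show ((m+1 : ℤ):ℚ)/e - ((n-1 : ℤ):ℚ)/d ≤ 1/d
          push_cast
          rw [hval]
        · show (m + 1 : ℤ) < (e:ℤ); exact hme1
        · show (n - 1 : ℤ) < (d:ℤ); omega
      rw [hI] at hmem2
      simp only [Set.mem_singleton_iff, Prod.mk.injEq] at hmem2
      omega
  · rcases lt_or_eq_of_le hhi with h | h
    · exact h
    · exfalso
      rw [div_sub_div _ _ he0 hd0, div_eq_div_iff (by positivity) hd0] at h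
      have hq : (m:ℚ)*d = ((n:ℚ)+1)*e :=
        mul_right_cancel₀ hd0 (by linear_combination h)
      have hint : m * (d:ℤ) = (n + 1) * e := by exact_mod_cast hq
      have hm1 : 1 ≤ m := by nlinarith
      have hnd1 : n + 1 < d := by nlinarith
      have hval : ((m:ℚ)-1)/e - ((n:ℚ)+1)/d = -(1/e) := by
        rw [div_sub_div _ _ he0 hd0, ← neg_div, div_eq_div_iff (by positivity) he0]
        linear_combination (e:ℚ) * hq
      have hmem2 : ((m - 1, n + 1) : ℤ × ℤ) ∈ Ik d e k := by
        refine ⟨by simp; omega, ?_, ?_, by simp; omega, by simp; omega, by simp; omega, ?_⟩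
        · show -(1:ℚ)/e ≤ ((m-1 : ℤ):ℚ)/e - ((n+1 : ℤ):ℚ)/d
          push_cast
          rw [hval, neg_div]
        · show ((m-1 : ℤ):ℚ)/e - ((n+1 : ℤ):ℚ)/d ≤ 1/d
          push_cast
          rw [hval]
          have h1 : (0:ℚ) < 1/d := by positivity
          have h2 : (0:ℚ) ≤ 1/e := by positivity
          linarith
        · show (n + 1 : ℤ) < (d:ℤ); exact hnd1
      rw [hI] at hmem2
      simp only [Set.mem_singleton_iff, Prod.mk.injEq] at hmem2
      omega
end

section
/- If I_k contains exactly two pairs, then they are of the form (m,n) and (m+1,n-1) for some m, n with (m+1)/e = n/d. -/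
lemma mem_Ik_int {d e : ℕ} (hd : 0 < d) (he : 0 < e) {k : ℤ} {q : ℤ × ℤ}
    (h : q ∈ Ik d e k) :
    q.1 + q.2 + 1 = k ∧ -(d:ℤ) ≤ d * q.1 - e * q.2 ∧ d * q.1 - e * q.2 ≤ e := by
  obtain ⟨h1, h2, h3, _⟩ := h
  have hd' : (0:ℚ) < d := by exact_mod_cast hd
  have he' : (0:ℚ) < e := by exact_mod_cast he
  have e1 : (-1/(e:ℚ)) * (e*d) = -d := by field_simp
  have e2 : ((q.1:ℚ)/e - (q.2:ℚ)/d) * (e*d) = d*q.1 - e*q.2 := by field_simp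
  have e3 : (1/(d:ℚ)) * (e*d) = e := by field_simp
  refine ⟨h1, ?_, ?_⟩
  · have := mul_le_mul_of_nonneg_right h2 (le_of_lt (mul_pos he' hd'))
    rw [e1, e2] at this
    exact_mod_cast this
  · have := mul_le_mul_of_nonneg_right h3 (le_of_lt (mul_pos he' hd'))
    rw [e2, e3] at this
    exact_mod_cast this

/-- If `I_k` contains exactly two pairs, then they are of the form `(m,n)` and
`(m+1,n-1)` with `(m+1)/e = n/d`. -/
theorem stmt2 (d e : ℕ) (hd : 0 < d) (he : 0 < e) (k : ℤ)
    (hk1 : 1 ≤ k) (hk2 : k ≤ (d : ℤ) + e - 1)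
    (h2 : (Ik d e k).ncard = 2) :
    ∃ m n : ℤ, Ik d e k = {(m, n), (m + 1, n - 1)} ∧
      ((m : ℚ) + 1) / e = (n : ℚ) / d := by
  obtain ⟨a, b, hab, hset⟩ := Set.ncard_eq_two.mp h2
  have ha : a ∈ Ik d e k := by rw [hset]; left; rfl
  have hb : b ∈ Ik d e k := by rw [hset]; right; rfl
  obtain ⟨ha1, ha2, ha3⟩ := mem_Ik_int hd he ha
  obtain ⟨hb1, hb2, hb3⟩ := mem_Ik_int hd he hb
  have hne : a.1 ≠ b.1 := by
    intro h
    apply hab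
    have : a.2 = b.2 := by omega
    exact Prod.ext h this
  rcases lt_or_gt_of_ne hne with hlt | hlt
  · have key : b.1 = a.1 + 1 ∧ ((a.1:ℤ) + 1) * d = a.2 * e := by
      constructor <;> nlinarith [hlt]
    obtain ⟨hb1', hkey⟩ := key
    refine ⟨a.1, a.2, ?_, ?_⟩
    · rw [hset, show b = (a.1 + 1, a.2 - 1) from Prod.ext hb1' (by omega)]
    · rw [div_eq_div_iff (by exact_mod_cast he.ne' : (e:ℚ) ≠ 0)
        (by exact_mod_cast hd.ne' : (d:ℚ) ≠ 0)]
      exact_mod_cast congrArg (Int.cast : ℤ → ℚ) hkey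
  · have key : a.1 = b.1 + 1 ∧ ((b.1:ℤ) + 1) * d = b.2 * e := by
      constructor <;> nlinarith [hlt]
    obtain ⟨ha1', hkey⟩ := key
    refine ⟨b.1, b.2, ?_, ?_⟩
    · rw [hset, show a = (b.1 + 1, b.2 - 1) from Prod.ext ha1' (by omega),
        Set.pair_comm]
    · rw [div_eq_div_iff (by exact_mod_cast he.ne' : (e:ℚ) ≠ 0)
        (by exact_mod_cast hd.ne' : (d:ℚ) ≠ 0)]
      exact_mod_cast congrArg (Int.cast : ℤ → ℚ) hkey
end

section
/- Suppose V_k = I_k contains two pairs (m,n) and (m+1,n-1), i.e. P(m) + Q(n) = P(m+1) + Q(n-1) where this common value is p_{[-e,d]}(k). Then 2·p_{[-e,d]}(k) = p_{[-e,d]}(k-1) + p_{[-e,d]}(k+1). -/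
/-- `Q(n) = (1/(p-1)) · Σ_{i=1}^n ⌈(pi-n)/d⌉`; this is `p_{[0,d]}(n)`.  Taking `d := e`
gives `P(m) = p_{[0,e]}(m)`. -/
noncomputable def Qfn (p d : ℕ) (n : ℤ) : ℚ :=
  (1 / ((p : ℚ) - 1)) * ∑ i ∈ Finset.Icc (1 : ℤ) n, (⌈((p : ℚ) * i - n) / d⌉ : ℚ)

/-- The set of values `P(m) + Q(n)` for `(m,n) ∈ I_k`. -/
noncomputable def Vals (p d e : ℕ) (k : ℤ) : Set ℚ :=
  (fun q : ℤ × ℤ => Qfn p e q.1 + Qfn p d q.2) '' Ik d e k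

/-- `v = p_{[-e,d]}(k)`: it is `0` at `k = 0`, `(d+e)/2` at `k = d+e`, and the minimum of
`P(m)+Q(n)` over `I_k` for `1 ≤ k ≤ d+e-1`. -/
noncomputable def IsPval (p d e : ℕ) (k : ℤ) (v : ℚ) : Prop :=
  (k = 0 ∧ v = 0) ∨ (k = (d : ℤ) + e ∧ v = ((d : ℚ) + e) / 2) ∨
    (1 ≤ k ∧ k ≤ (d : ℤ) + e - 1 ∧ IsLeast (Vals p d e k) v)

lemma aux_lo (D E x y : ℚ) (hD : 0 < D) (hE : 0 < E) :
    -(1:ℚ)/E ≤ x/E - y/D ↔ -D ≤ x*D - y*E := by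
  rw [div_sub_div _ _ hE.ne' hD.ne', div_le_div_iff₀ hE (by positivity)]
  constructor <;> intro h <;> nlinarith

lemma aux_hi (D E x y : ℚ) (hD : 0 < D) (hE : 0 < E) :
    x/E - y/D ≤ 1/D ↔ x*D - y*E ≤ E := by
  rw [div_sub_div _ _ hE.ne' hD.ne', div_le_div_iff₀ (by positivity) hD]
  constructor <;> intro h <;> nlinarith

lemma mem_Ik_iff {d e : ℕ} (hd : 0 < d) (he : 0 < e) (k : ℤ) (q : ℤ × ℤ) :
    q ∈ Ik d e k ↔ (q.1 + q.2 + 1 = k ∧ -(d:ℤ) ≤ q.1 * d - q.2 * e ∧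
      q.1 * d - q.2 * e ≤ e ∧ 0 ≤ q.1 ∧ q.1 < e ∧ 0 ≤ q.2 ∧ q.2 < d) := by
  have hd' : (0:ℚ) < d := by exact_mod_cast hd
  have he' : (0:ℚ) < e := by exact_mod_cast he
  simp only [Ik, Set.mem_setOf_eq, aux_lo (d:ℚ) (e:ℚ) _ _ hd' he',
    aux_hi (d:ℚ) (e:ℚ) _ _ hd' he']
  constructor <;> intro h <;> exact_mod_cast h

set_option maxHeartbeats 1000000 in
/-- If `V_k = I_k` contains two pairs `(m,n)`, `(m+1,n-1)` (i.e. `P(m)+Q(n) = P(m+1)+Q(n-1)`,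
this common value being `p_{[-e,d]}(k)`), then
`2·p_{[-e,d]}(k) = p_{[-e,d]}(k-1) + p_{[-e,d]}(k+1)`. -/
theorem stmt4 (p d e : ℕ) (hp : p.Prime) (hd : 0 < d) (he : 0 < e)
    (hcop : Nat.Coprime (Nat.lcm d e) p) (k m n : ℤ)
    (hk1 : 1 ≤ k) (hk2 : k ≤ (d : ℤ) + e - 1)
    (hI : Ik d e k = {(m, n), (m + 1, n - 1)})
    (heq : Qfn p e m + Qfn p d n = Qfn p e (m + 1) + Qfn p d (n - 1))
    (v₁ v₂ v₃ : ℚ)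
    (h₁ : IsPval p d e (k - 1) v₁) (h₂ : IsPval p d e k v₂)
    (h₃ : IsPval p d e (k + 1) v₃) :
    2 * v₂ = v₁ + v₃ := by
  have hdz : (0:ℤ) < d := by exact_mod_cast hd
  have hez : (0:ℤ) < e := by exact_mod_cast he
  have hm : (m, n) ∈ Ik d e k := by rw [hI]; left; rfl
  have hm' : (m + 1, n - 1) ∈ Ik d e k := by rw [hI]; right; rfl
  rw [mem_Ik_iff hd he] at hm hm'
  obtain ⟨hk, t1, t2, hm0, hme, hn0, hnd⟩ := hm
  obtain ⟨hk', t1', t2', hm0', hme', hn0', hnd'⟩ := hm'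
  simp only at hk t1 t2 hm0 hme hn0 hnd hk' t1' t2' hm0' hme' hn0' hnd'
  have ht : m * d - n * e = -(d:ℤ) := by linarith [t1, t2']
  have hn1 : 1 ≤ n := by
    by_contra h
    push_neg at h
    linarith [mul_nonneg hm0 hdz.le,
      mul_nonpos_of_nonpos_of_nonneg (by omega : n ≤ 0) hez.le, ht]
  -- I_{k-1} = {(m, n-1)}
  have hIk1 : Ik d e (k - 1) = {(m, n - 1)} := by
    ext q
    rw [mem_Ik_iff hd he, Set.mem_singleton_iff, Prod.ext_iff]
    constructor
    · rintro ⟨h1, h2, h3, h4, h5, h6, h7⟩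
      have hq2 : q.2 = m + n - 1 - q.1 := by omega
      rw [hq2] at h2 h3
      have ha : q.1 = m := by
        rcases lt_trichotomy q.1 m with hlt | heqq | hgt
        · exfalso
          have hh := mul_le_mul_of_nonneg_right (show q.1 ≤ m - 1 by omega)
            (show (0:ℤ) ≤ d + e by omega)
          linarith [h2, ht, hh]
        · exact heqq
        · exfalso
          have hh := mul_le_mul_of_nonneg_right (show m + 1 ≤ q.1 by omega)
            (show (0:ℤ) ≤ d + e by omega)
          linarith [h3, ht, hh]
      exact ⟨ha, by omega⟩
    · rintro ⟨h1, h2⟩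
      refine ⟨by omega, ?_, ?_, by omega, by omega, by omega, by omega⟩
      · rw [h1, h2]; dsimp only; linarith [ht]
      · rw [h1, h2]; dsimp only; linarith [ht]
  -- I_{k+1} = {(m+1, n)}
  have hIk3 : Ik d e (k + 1) = {(m + 1, n)} := by
    ext q
    rw [mem_Ik_iff hd he, Set.mem_singleton_iff, Prod.ext_iff]
    constructor
    · rintro ⟨h1, h2, h3, h4, h5, h6, h7⟩
      have hq2 : q.2 = m + n + 1 - q.1 := by omega
      rw [hq2] at h2 h3
      have ha : q.1 = m + 1 := by
        rcases lt_trichotomy q.1 (m + 1) with hlt | heqq | hgt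
        · exfalso
          have hh := mul_le_mul_of_nonneg_right (show q.1 ≤ m by omega)
            (show (0:ℤ) ≤ d + e by omega)
          linarith [h2, ht, hh]
        · exact heqq
        · exfalso
          have hh := mul_le_mul_of_nonneg_right (show m + 2 ≤ q.1 by omega)
            (show (0:ℤ) ≤ d + e by omega)
          linarith [h3, ht, hh]
      exact ⟨ha, by omega⟩
    · rintro ⟨h1, h2⟩
      refine ⟨by omega, ?_, ?_, by omega, by omega, by omega, by omega⟩
      · rw [h1, h2]; dsimp only; linarith [ht]
      · rw [h1, h2]; dsimp only; linarith [ht]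
  -- values sets
  have hV1 : Vals p d e (k - 1) = {Qfn p e m + Qfn p d (n - 1)} := by
    rw [Vals, hIk1, Set.image_singleton]
  have hV3 : Vals p d e (k + 1) = {Qfn p e (m + 1) + Qfn p d n} := by
    rw [Vals, hIk3, Set.image_singleton]
  have hV2 : Vals p d e k = {Qfn p e m + Qfn p d n} := by
    rw [Vals, hI, Set.image_insert_eq, Set.image_singleton]
    ext x
    simp only [Set.mem_insert_iff, Set.mem_singleton_iff]
    constructor
    · rintro (h | h)
      · exact h
      · rw [h]; exact heq.symm
    · intro h; left; exact h
  -- extract the values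
  have hv2 : v₂ = Qfn p e m + Qfn p d n := by
    rcases h₂ with ⟨h, _⟩ | ⟨h, _⟩ | ⟨_, _, hL⟩
    · omega
    · omega
    · have := hL.1
      rw [hV2, Set.mem_singleton_iff] at this
      exact this
  have hv1 : v₁ = Qfn p e m + Qfn p d (n - 1) := by
    rcases h₁ with ⟨h, _⟩ | ⟨h, _⟩ | ⟨_, _, hL⟩
    · omega
    · omega
    · have := hL.1
      rw [hV1, Set.mem_singleton_iff] at this
      exact this
  have hv3 : v₃ = Qfn p e (m + 1) + Qfn p d n := by
    rcases h₃ with ⟨h, _⟩ | ⟨h, _⟩ | ⟨_, _, hL⟩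
    · omega
    · omega
    · have := hL.1
      rw [hV3, Set.mem_singleton_iff] at this
      exact this
  rw [hv1, hv2, hv3]
  linarith [heq]
end

section
/- Suppose I_k contains two pairs (m,n) and (m+1,n-1) but the minimum P(m)+Q(n) < P(m+1)+Q(n-1) is attained only at (m,n). Then 2·p_{[-e,d]}(k) < p_{[-e,d]}(k-1) + p_{[-e,d]}(k+1). -/
/-- Clearing denominators in an inequality of the form `x/E - y/D ≤ r`. -/
lemma clear_div (D E x y r : ℚ) (hD : 0 < D) (hE : 0 < E) (h : x / E - y / D ≤ r) :
    x * D - y * E ≤ r * (E * D) := by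
  have hD' : D ≠ 0 := hD.ne'
  have hE' : E ≠ 0 := hE.ne'
  have h' := mul_le_mul_of_nonneg_right h (mul_pos hE hD).le
  have hx : (x / E - y / D) * (E * D) = x * D - y * E := by field_simp
  rw [hx] at h'
  exact h'

/-- If `I_k` contains two pairs `(m,n)`, `(m+1,n-1)` but the minimum
`P(m)+Q(n) < P(m+1)+Q(n-1)` is attained only at `(m,n)`, then
`2·p_{[-e,d]}(k) < p_{[-e,d]}(k-1) + p_{[-e,d]}(k+1)`. -/
theorem stmt5 (p d e : ℕ) (hp : p.Prime) (hd : 0 < d) (he : 0 < e) (k m n : ℤ)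
    (hk1 : 1 ≤ k) (hk2 : k ≤ (d : ℤ) + e - 1)
    (hI : Ik d e k = {(m, n), (m + 1, n - 1)})
    (hlt : Qfn p e m + Qfn p d n < Qfn p e (m + 1) + Qfn p d (n - 1))
    (v₁ v₂ v₃ : ℚ)
    (h₁ : IsPval p d e (k - 1) v₁) (h₂ : IsPval p d e k v₂)
    (h₃ : IsPval p d e (k + 1) v₃) :
    2 * v₂ < v₁ + v₃ := by
  have hD : (0 : ℚ) < d := by exact_mod_cast hd
  have hE : (0 : ℚ) < e := by exact_mod_cast he
  have hmem1 : ((m, n) : ℤ × ℤ) ∈ Ik d e k := by rw [hI]; left; rfl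
  have hmem2 : ((m + 1, n - 1) : ℤ × ℤ) ∈ Ik d e k := by rw [hI]; right; rfl
  obtain ⟨hsum, hlo, hhi, hm0, hme, hn0, hnd⟩ := hmem1
  obtain ⟨hsum2, hlo2, hhi2, hm0', hme', hn0', hnd'⟩ := hmem2
  simp only at hsum hlo hhi hm0 hme hn0 hnd hsum2 hlo2 hhi2 hm0' hme' hn0' hnd'
  push_cast at hlo hhi hlo2 hhi2
  -- clear denominators
  rw [neg_div] at hlo hlo2
  have c1 : -(d : ℚ) ≤ (m : ℚ) * d - (n : ℚ) * e := by
    have h' : (n : ℚ) / d - (m : ℚ) / e ≤ 1 / e := by linarith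
    have := clear_div e d (n : ℚ) (m : ℚ) (1 / e) hE hD h'
    have he1 : (1 / (e : ℚ)) * (d * e) = d := by field_simp
    linarith
  have c2 : ((m : ℚ) + 1) * d - ((n : ℚ) - 1) * e ≤ (e : ℚ) := by
    have := clear_div d e ((m : ℚ) + 1) ((n : ℚ) - 1) (1 / d) hD hE hhi2
    have hd1 : (1 / (d : ℚ)) * (e * d) = e := by field_simp
    linarith
  -- the key pinning equality: m*(d+e) = (k-1)*e - d
  have hkey : (m : ℚ) * (d + e) = ((k : ℚ) - 1) * e - d := by
    have hn : (n : ℚ) = (k : ℚ) - 1 - m := by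
      have : n = k - 1 - m := by omega
      exact_mod_cast congrArg (fun z : ℤ => (z : ℚ)) this
    rw [hn] at c1 c2
    ring_nf at c1 c2 ⊢
    linarith
  -- k - 1 ≥ 1 and k + 1 ≤ d + e - 1
  have hk1' : 2 ≤ k := by omega
  have hk2' : k + 1 ≤ (d : ℤ) + e - 1 := by omega
  -- extract the IsLeast branches
  have hL1 : IsLeast (Vals p d e (k - 1)) v₁ := by
    rcases h₁ with ⟨h, _⟩ | ⟨h, _⟩ | ⟨_, _, h⟩
    · omega
    · omega
    · exact h
  have hL2 : IsLeast (Vals p d e k) v₂ := by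
    rcases h₂ with ⟨h, _⟩ | ⟨h, _⟩ | ⟨_, _, h⟩
    · omega
    · omega
    · exact h
  have hL3 : IsLeast (Vals p d e (k + 1)) v₃ := by
    rcases h₃ with ⟨h, _⟩ | ⟨h, _⟩ | ⟨_, _, h⟩
    · omega
    · omega
    · exact h
  -- v₂ = P(m) + Q(n)
  have hmem1' : ((m, n) : ℤ × ℤ) ∈ Ik d e k := by rw [hI]; left; rfl
  have hv2le : v₂ ≤ Qfn p e m + Qfn p d n := hL2.2 ⟨(m, n), hmem1', rfl⟩
  have hv2 : v₂ = Qfn p e m + Qfn p d n := by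
    obtain ⟨q, hq, hval⟩ := hL2.1
    rw [hI] at hq
    simp only [Set.mem_insert_iff, Set.mem_singleton_iff] at hq
    rcases hq with rfl | rfl
    · exact hval.symm
    · simp only at hval
      linarith
  -- a general pinning lemma for neighbors
  have pin : ∀ (j : ℤ) (a b : ℤ), ((a, b) : ℤ × ℤ) ∈ Ik d e j →
      (a : ℚ) * (d + e) ≤ ((j : ℚ) - 1) * e + e ∧
      ((j : ℚ) - 1) * e - d ≤ (a : ℚ) * (d + e) ∧ a + b + 1 = j := by
    intro j a b hab
    obtain ⟨hs, hl, hh, _, _, _, _⟩ := hab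
    simp only at hs hl hh
    rw [neg_div] at hl
    have hb : (b : ℚ) = (j : ℚ) - 1 - a := by
      have : b = j - 1 - a := by omega
      exact_mod_cast congrArg (fun z : ℤ => (z : ℚ)) this
    have d1 : -(d : ℚ) ≤ (a : ℚ) * d - (b : ℚ) * e := by
      have h' : (b : ℚ) / d - (a : ℚ) / e ≤ 1 / e := by linarith
      have := clear_div e d (b : ℚ) (a : ℚ) (1 / e) hE hD h'
      have he1 : (1 / (e : ℚ)) * (d * e) = d := by field_simp
      linarith
    have d2 : (a : ℚ) * d - (b : ℚ) * e ≤ (e : ℚ) := by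
      have := clear_div d e (a : ℚ) (b : ℚ) (1 / d) hD hE hh
      have hd1 : (1 / (d : ℚ)) * (e * d) = e := by field_simp
      linarith
    rw [hb] at d1 d2
    refine ⟨by ring_nf at d2 ⊢; linarith, by ring_nf at d1 ⊢; linarith, by omega⟩
  -- v₁ = P(m) + Q(n-1)
  have hv1 : v₁ = Qfn p e m + Qfn p d (n - 1) := by
    obtain ⟨q, hq, hval⟩ := hL1.1
    obtain ⟨a, b⟩ := q
    obtain ⟨pu, pl, ps⟩ := pin (k - 1) a b hq
    have hcast : ((k : ℤ) - 1 : ℤ) = k - 1 := rfl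
    push_cast at pu pl
    have ham : a = m := by
      have h1 : (a : ℚ) < (m : ℚ) + 1 := by
        by_contra hc
        push_neg at hc
        have hmul := mul_le_mul_of_nonneg_right hc (by positivity : (0:ℚ) ≤ (d:ℚ) + e)
        ring_nf at hmul pu hkey
        linarith
      have h2 : (m : ℚ) - 1 < (a : ℚ) := by
        by_contra hc
        push_neg at hc
        have hmul := mul_le_mul_of_nonneg_right hc (by positivity : (0:ℚ) ≤ (d:ℚ) + e)
        ring_nf at hmul pl hkey
        linarith
      have h1' : a < m + 1 := by exact_mod_cast h1
      have h2' : m - 1 < a := by exact_mod_cast h2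
      omega
    have hbn : b = n - 1 := by omega
    subst ham hbn
    exact hval.symm
  -- v₃ = P(m+1) + Q(n)
  have hv3 : v₃ = Qfn p e (m + 1) + Qfn p d n := by
    obtain ⟨q, hq, hval⟩ := hL3.1
    obtain ⟨a, b⟩ := q
    obtain ⟨pu, pl, ps⟩ := pin (k + 1) a b hq
    push_cast at pu pl
    have ham : a = m + 1 := by
      have h1 : (a : ℚ) < (m : ℚ) + 2 := by
        by_contra hc
        push_neg at hc
        have hmul := mul_le_mul_of_nonneg_right hc (by positivity : (0:ℚ) ≤ (d:ℚ) + e)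
        ring_nf at hmul pu hkey
        linarith
      have h2 : (m : ℚ) < (a : ℚ) := by
        by_contra hc
        push_neg at hc
        have hmul := mul_le_mul_of_nonneg_right hc (by positivity : (0:ℚ) ≤ (d:ℚ) + e)
        ring_nf at hmul pl hkey
        linarith
      have h1' : a < m + 2 := by exact_mod_cast h1
      have h2' : m < a := by exact_mod_cast h2
      omega
    have hbn : b = n := by omega
    subst ham hbn
    simp only at hval
    exact hval.symm
  rw [hv1, hv2, hv3]
  linarith
end

section
/- For 0 ≤ n < d, the increment Q(n+1) - Q(n) satisfies Q(n+1) - Q(n) ≥ (1/(p-1))·(⌈(p-1)(n+1)/d⌉ - 1). -/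
lemma ceil_pred_ge (d : ℕ) (hd : 0 < d) (a : ℤ) :
    ⌈(a:ℚ)/(d:ℚ)⌉ - 1 ≤ ⌈((a:ℚ) - 1)/(d:ℚ)⌉ := by
  have hdq : (0:ℚ) < d := by exact_mod_cast hd
  have hd1 : (1:ℚ)/d ≤ 1 := by
    rw [div_le_one hdq]; exact_mod_cast hd
  have h1 : ⌈(a:ℚ)/(d:ℚ)⌉ ≤ ⌈((a:ℚ) - 1)/(d:ℚ)⌉ + 1 := by
    apply Int.ceil_le.mpr
    push_cast
    have h2 := Int.le_ceil (((a:ℚ) - 1)/d)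
    have h3 : ((a:ℚ))/d = ((a:ℚ)-1)/d + 1/d := by ring
    linarith
  omega

lemma ceil_pred_ge' (d : ℕ) (hd : 0 < d) (a : ℤ) (h : ¬ (d:ℤ) ∣ (a-1)) :
    ⌈(a:ℚ)/(d:ℚ)⌉ ≤ ⌈((a:ℚ) - 1)/(d:ℚ)⌉ := by
  have hdq : (0:ℚ) < d := by exact_mod_cast hd
  set c := ⌈((a:ℚ)-1)/(d:ℚ)⌉ with hc
  have h1 : ((a:ℚ)-1) ≤ c * d := by
    have h2 := Int.le_ceil (((a:ℚ)-1)/d)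
    rw [div_le_iff₀ hdq] at h2
    exact h2
  have h2 : a - 1 ≤ c * d := by exact_mod_cast h1
  have h3 : a - 1 ≠ c * d := by
    intro he; exact h ⟨c, by linarith [he]⟩
  have h4 : a ≤ c * d := by omega
  apply Int.ceil_le.mpr
  rw [div_le_iff₀ hdq]
  exact_mod_cast h4

lemma key_sum (p d : ℕ) (hd : 0 < d) (hcop : Nat.Coprime p d)
    (n : ℤ) (h0 : 0 ≤ n) (h1 : n < d) :
    (-1 : ℤ) ≤ ∑ i ∈ Finset.Icc (1:ℤ) n,
      (⌈((p:ℚ)*i - ((n:ℚ)+1))/(d:ℚ)⌉ - ⌈((p:ℚ)*i - (n:ℚ))/(d:ℚ)⌉) := by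
  classical
  set g : ℤ → ℤ := fun i =>
    ⌈((p:ℚ)*i - ((n:ℚ)+1))/(d:ℚ)⌉ - ⌈((p:ℚ)*i - (n:ℚ))/(d:ℚ)⌉ with hg
  have hrw : ∀ i : ℤ,
      (((p:ℚ)*i - ((n:ℚ)+1))/(d:ℚ) = (((((p:ℤ)*i - n : ℤ)):ℚ) - 1)/(d:ℚ)) ∧
      (((p:ℚ)*i - (n:ℚ))/(d:ℚ) = ((((p:ℤ)*i - n : ℤ)):ℚ)/(d:ℚ)) := by
    intro i; constructor <;> (push_cast; ring)
  have hterm1 : ∀ i : ℤ, -1 ≤ g i := by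
    intro i
    have := ceil_pred_ge d hd ((p:ℤ)*i - n)
    simp only [hg, (hrw i).1, (hrw i).2]
    omega
  have hterm0 : ∀ i : ℤ, ¬ (d:ℤ) ∣ ((p:ℤ)*i - n - 1) → 0 ≤ g i := by
    intro i hi
    have := ceil_pred_ge' d hd ((p:ℤ)*i - n) hi
    simp only [hg, (hrw i).1, (hrw i).2]
    omega
  set P : ℤ → Prop := fun i => (d:ℤ) ∣ ((p:ℤ)*i - n - 1) with hP
  set S := (Finset.Icc (1:ℤ) n).filter P with hS
  have hcard : S.card ≤ 1 := by
    apply Finset.card_le_one.mpr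
    intro a ha b hb
    simp only [hS, Finset.mem_filter, Finset.mem_Icc, hP] at ha hb
    have hdvd : (d:ℤ) ∣ (p:ℤ) * (a - b) := by
      have := dvd_sub ha.2 hb.2
      have he : ((p:ℤ)*a - n - 1) - ((p:ℤ)*b - n - 1) = (p:ℤ) * (a - b) := by ring
      rwa [he] at this
    have hco : IsCoprime (d:ℤ) (p:ℤ) := by
      rw [Int.isCoprime_iff_gcd_eq_one]
      exact hcop.symm
    have hdvd2 : (d:ℤ) ∣ (a - b) := hco.dvd_of_dvd_mul_left hdvd
    rcases hdvd2 with ⟨c, hc⟩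
    have hdz : (0:ℤ) < d := by exact_mod_cast hd
    have hub : (d:ℤ) * c ≤ n - 1 := by omega
    have hlb : 1 - n ≤ (d:ℤ) * c := by omega
    have hc0 : c = 0 := by
      rcases lt_trichotomy c 0 with h | h | h
      · exfalso
        have : (d:ℤ) * c ≤ -d := by nlinarith
        omega
      · exact h
      · exfalso
        have : (d:ℤ) ≤ d * c := by nlinarith
        omega
    rw [hc0, mul_zero] at hc
    omega
  have hsplit := Finset.sum_filter_add_sum_filter_not (Finset.Icc (1:ℤ) n) P g
  have hA : -(S.card : ℤ) ≤ ∑ i ∈ S, g i := by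
    have := Finset.card_nsmul_le_sum S g (-1) (fun i _ => hterm1 i)
    simpa using this
  have hB : (0:ℤ) ≤ ∑ i ∈ (Finset.Icc (1:ℤ) n).filter (fun i => ¬ P i), g i := by
    apply Finset.sum_nonneg
    intro i hi
    simp only [Finset.mem_filter] at hi
    exact hterm0 i hi.2
  have : -(S.card : ℤ) ≤ ∑ i ∈ Finset.Icc (1:ℤ) n, g i := by
    rw [← hsplit]; exact le_add_of_le_of_nonneg (by rw [← hS]; exact hA) hB
  have hcz : (S.card : ℤ) ≤ 1 := by exact_mod_cast hcard
  exact le_trans (neg_le_neg hcz) this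

/-- For `0 ≤ n < d`, `Q(n+1) - Q(n) ≥ (1/(p-1))·(⌈(p-1)(n+1)/d⌉ - 1)`. -/
theorem stmt6 (p d : ℕ) (hp : p.Prime) (hd : 0 < d) (hcop : Nat.Coprime p d)
    (n : ℤ) (h0 : 0 ≤ n) (h1 : n < d) :
    Qfn p d (n + 1) - Qfn p d n ≥
      (1 / ((p : ℚ) - 1)) * ((⌈((p : ℚ) - 1) * ((n : ℚ) + 1) / d⌉ : ℚ) - 1) := by
  have hp2 : 2 ≤ p := hp.two_le
  have hpq : (0:ℚ) < (p:ℚ) - 1 := by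
    have : (2:ℚ) ≤ p := by exact_mod_cast hp2
    linarith
  have hfac : (0:ℚ) ≤ 1 / ((p:ℚ) - 1) := by positivity
  have hsplit : ∑ i ∈ Finset.Icc (1:ℤ) (n+1), (⌈((p:ℚ)*i - ((n:ℚ)+1))/(d:ℚ)⌉ : ℚ)
      = (∑ i ∈ Finset.Icc (1:ℤ) n, (⌈((p:ℚ)*i - ((n:ℚ)+1))/(d:ℚ)⌉ : ℚ))
        + (⌈((p:ℚ)-1)*((n:ℚ)+1)/(d:ℚ)⌉ : ℚ) := by
    have hins : Finset.Icc (1:ℤ) (n+1) = insert (n+1) (Finset.Icc 1 n) := by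
      ext x
      simp only [Finset.mem_Icc, Finset.mem_insert]
      omega
    rw [hins, Finset.sum_insert (by simp), add_comm]
    congr 2
    have : ((p:ℚ)*((n:ℤ)+1:ℤ) - ((n:ℚ)+1))/(d:ℚ) = ((p:ℚ)-1)*((n:ℚ)+1)/(d:ℚ) := by
      push_cast; ring
    rw [this]
  have hQ1 : Qfn p d (n+1) = (1 / ((p:ℚ) - 1)) *
      ((∑ i ∈ Finset.Icc (1:ℤ) n, (⌈((p:ℚ)*i - ((n:ℚ)+1))/(d:ℚ)⌉ : ℚ))
        + (⌈((p:ℚ)-1)*((n:ℚ)+1)/(d:ℚ)⌉ : ℚ)) := by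
    rw [Qfn, ← hsplit]
    push_cast
    rfl
  have hkey := key_sum p d hd hcop n h0 h1
  have hkeyQ : (-1 : ℚ) ≤ ∑ i ∈ Finset.Icc (1:ℤ) n,
      ((⌈((p:ℚ)*i - ((n:ℚ)+1))/(d:ℚ)⌉ : ℚ) - (⌈((p:ℚ)*i - (n:ℚ))/(d:ℚ)⌉ : ℚ)) := by
    exact_mod_cast hkey
  rw [Finset.sum_sub_distrib] at hkeyQ
  rw [hQ1, Qfn, ge_iff_le, ← mul_sub]
  apply mul_le_mul_of_nonneg_left _ hfac
  linarith
end

section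
/- For 1 ≤ n ≤ d, the increment Q(n) - Q(n-1) satisfies Q(n) - Q(n-1) ≤ (1/(p-1))·⌈(p-1)n/d⌉. -/
/-- For `1 ≤ n ≤ d`, `Q(n) - Q(n-1) ≤ (1/(p-1))·⌈(p-1)n/d⌉`. -/
theorem stmt7 (p d : ℕ) (hp : p.Prime) (hd : 0 < d) (hcop : Nat.Coprime p d)
    (n : ℤ) (h0 : 1 ≤ n) (h1 : n ≤ d) :
    Qfn p d n - Qfn p d (n - 1) ≤
      (1 / ((p : ℚ) - 1)) * (⌈((p : ℚ) - 1) * (n : ℚ) / d⌉ : ℚ) := by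
  have hp2 : (2:ℚ) ≤ p := by exact_mod_cast hp.two_le
  have hdpos : (0:ℚ) < d := by exact_mod_cast hd
  rw [Qfn, Qfn, ← mul_sub]
  refine mul_le_mul_of_nonneg_left ?_ (div_nonneg zero_le_one (by linarith))
  have hset : Finset.Icc (1:ℤ) n = insert n (Finset.Icc (1:ℤ) (n-1)) := by
    ext x; simp only [Finset.mem_Icc, Finset.mem_insert]; omega
  have hnot : n ∉ Finset.Icc (1:ℤ) (n-1) := by simp
  have key : ∑ i ∈ Finset.Icc (1:ℤ) n, (⌈((p:ℚ)*i - n)/d⌉:ℚ)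
      = (∑ i ∈ Finset.Icc (1:ℤ) (n-1), (⌈((p:ℚ)*i - n)/d⌉:ℚ))
        + (⌈((p:ℚ)*n - n)/d⌉:ℚ) := by
    rw [hset, Finset.sum_insert hnot]; ring
  rw [key]
  have hceil : (⌈((p:ℚ)*n - n)/d⌉:ℚ) = (⌈((p:ℚ)-1)*(n:ℚ)/d⌉:ℚ) := by
    congr 2
    ring
  rw [hceil]
  have hsum : ∑ i ∈ Finset.Icc (1:ℤ) (n-1), (⌈((p:ℚ)*i - n)/d⌉:ℚ)
      ≤ ∑ i ∈ Finset.Icc (1:ℤ) (n-1), (⌈((p:ℚ)*i - ((n:ℤ)-1 : ℤ))/d⌉:ℚ) := by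
    apply Finset.sum_le_sum
    intro i _
    have h : ((p:ℚ)*i - n)/d ≤ ((p:ℚ)*i - ((n:ℤ)-1 : ℤ))/d := by
      gcongr
      push_cast; linarith
    exact_mod_cast Int.ceil_le_ceil h
  linarith
end

section
/- If p > 3d, then for 0 < n < d one has ⌈(p-1)n/d⌉ < ⌈(p-1)(n+1)/d⌉ - 1, and consequently the function n ↦ Q(n) is strictly convex on {0,1,...,d}: 2·Q(n) < Q(n-1) + Q(n+1) for 0 < n < d. -/
private lemma ceil_div_int (d : ℕ) (hd : 0 < d) (x q : ℤ) (h1 : (d:ℤ) * q < x)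
    (h2 : x ≤ (d:ℤ) * q + d) : ⌈((x:ℤ):ℚ)/(d:ℚ)⌉ = q + 1 := by
  have hd0 : (0:ℚ) < d := by exact_mod_cast hd
  rw [Int.ceil_eq_iff]
  have hc1 : (((d:ℤ)*q : ℤ):ℚ) < ((x:ℤ):ℚ) := by exact_mod_cast h1
  have hc2 : ((x:ℤ):ℚ) ≤ (((d:ℤ)*q + d : ℤ):ℚ) := by exact_mod_cast h2
  push_cast at hc1 hc2
  constructor
  · rw [lt_div_iff₀ hd0]; push_cast; linarith
  · rw [div_le_iff₀ hd0]; push_cast; linarith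

private lemma ceil_step (d : ℕ) (hd : 0 < d) (x : ℤ) :
    ⌈((x+1:ℤ):ℚ)/(d:ℚ)⌉ = ⌈((x:ℤ):ℚ)/(d:ℚ)⌉ + if (d:ℤ) ∣ x then 1 else 0 := by
  have hd' : (0:ℤ) < d := by exact_mod_cast hd
  have hq := Int.mul_ediv_add_emod x d
  have hr0 : 0 ≤ x % d := Int.emod_nonneg x (by omega)
  have hrd : x % d < d := Int.emod_lt_of_pos x hd'
  by_cases h : (d:ℤ) ∣ x
  · have hr : x % d = 0 := Int.emod_eq_zero_of_dvd h
    rw [if_pos h]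
    rw [ceil_div_int d hd x (x/d - 1) (by nlinarith) (by nlinarith),
      ceil_div_int d hd (x+1) (x/d) (by nlinarith) (by nlinarith)]
    ring
  · have hr : x % d ≠ 0 := fun hc => h (Int.dvd_of_emod_eq_zero hc)
    have hr1 : 1 ≤ x % d := by omega
    rw [if_neg h]
    rw [ceil_div_int d hd x (x/d) (by nlinarith) (by nlinarith),
      ceil_div_int d hd (x+1) (x/d) (by nlinarith) (by nlinarith)]
    ring

private lemma ceil_shift (d : ℕ) (hd : 0 < d) (x k : ℤ) :
    ⌈((x + d*k :ℤ):ℚ)/(d:ℚ)⌉ = ⌈((x:ℤ):ℚ)/(d:ℚ)⌉ + k := by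
  have hd0 : (0:ℚ) < d := by exact_mod_cast hd
  have h : ((x + (d:ℤ)*k :ℤ):ℚ)/(d:ℚ) = (x:ℚ)/d + k := by
    push_cast; field_simp
  rw [h, Int.ceil_add_intCast]

private lemma ceil_mono' (d : ℕ) (hd : 0 < d) (x y : ℤ) (h : x ≤ y) :
    ⌈((x:ℤ):ℚ)/(d:ℚ)⌉ ≤ ⌈((y:ℤ):ℚ)/(d:ℚ)⌉ := by
  have hd0 : (0:ℚ) < d := by exact_mod_cast hd
  apply Int.ceil_mono
  apply (div_le_div_iff_of_pos_right hd0).mpr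
  exact_mod_cast h

/-- If `p > 3d` then for `0 < n < d` one has `⌈(p-1)n/d⌉ < ⌈(p-1)(n+1)/d⌉ - 1`, and
consequently `Q` is strictly convex on `{0, 1, …, d}`: `2·Q(n) < Q(n-1) + Q(n+1)`. -/
theorem stmt8 (p d : ℕ) (hp : p.Prime) (hd : 0 < d) (hcop : Nat.Coprime p d)
    (hpd : 3 * d < p) (n : ℤ) (h0 : 0 < n) (h1 : n < d) :
    ⌈((p : ℚ) - 1) * (n : ℚ) / d⌉ < ⌈((p : ℚ) - 1) * ((n : ℚ) + 1) / d⌉ - 1 ∧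
      2 * Qfn p d n < Qfn p d (n - 1) + Qfn p d (n + 1) := by
  set P : ℤ := (p : ℤ) with hP
  set D : ℤ := (d : ℤ) with hD
  have hPD : 3 * D < P := by rw [hP, hD]; exact_mod_cast hpd
  have hD0 : (0:ℤ) < D := by rw [hD]; exact_mod_cast hd
  set c : ℤ → ℤ := fun x => ⌈((x:ℤ):ℚ)/(d:ℚ)⌉ with hc
  have step : ∀ x : ℤ, c (x + 1) = c x + if D ∣ x then 1 else 0 := fun x => ceil_step d hd x
  have shift : ∀ x k : ℤ, c (x + D * k) = c x + k := fun x k => ceil_shift d hd x k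
  have mono : ∀ x y : ℤ, x ≤ y → c x ≤ c y := fun x y h => ceil_mono' d hd x y h
  -- boundary inequalities
  have hb2 : c ((P-1)*n) + 3 ≤ c ((P-1)*(n+1)) := by
    have h := shift ((P-1)*n) 3
    have hle : (P-1)*n + D*3 ≤ (P-1)*(n+1) := by nlinarith
    calc c ((P-1)*n) + 3 = c ((P-1)*n + D*3) := (h).symm
      _ ≤ c ((P-1)*(n+1)) := mono _ _ hle
  have cast1 : ((p : ℚ) - 1) * (n : ℚ) / d = (((P-1)*n : ℤ):ℚ)/(d:ℚ) := by rw [hP]; push_cast; ring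
  have cast2 : ((p : ℚ) - 1) * ((n : ℚ)+1) / d = (((P-1)*(n+1) : ℤ):ℚ)/(d:ℚ) := by
    rw [hP]; push_cast; ring
  have part1 : ⌈((p : ℚ) - 1) * (n : ℚ) / d⌉ < ⌈((p : ℚ) - 1) * ((n : ℚ) + 1) / d⌉ - 1 := by
    rw [cast1, cast2]
    have : c ((P-1)*n) + 3 ≤ c ((P-1)*(n+1)) := hb2
    simp only [hc] at this
    omega
  refine ⟨part1, ?_⟩
  -- the sums
  set S : ℤ → ℤ := fun m => ∑ i ∈ Finset.Icc (1:ℤ) m, c (P*i - m) with hS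
  have hQ : ∀ m : ℤ, Qfn p d m = (1/((p:ℚ)-1)) * ((S m : ℤ) : ℚ) := by
    intro m
    unfold Qfn
    congr 1
    rw [hS]
    push_cast
    apply Finset.sum_congr rfl
    intro i _
    rw [hP]
    congr 2
    push_cast
    ring
  have hins : ∀ m : ℤ, 0 ≤ m → ∀ f : ℤ → ℤ,
      ∑ i ∈ Finset.Icc (1:ℤ) (m+1), f i = (∑ i ∈ Finset.Icc (1:ℤ) m, f i) + f (m+1) := by
    intro m hm f
    rw [show Finset.Icc (1:ℤ) (m+1) = insert (m+1) (Finset.Icc 1 m) by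
      ext z; simp only [Finset.mem_Icc, Finset.mem_insert]; omega]
    rw [Finset.sum_insert (by simp only [Finset.mem_Icc]; omega)]
    ring
  set I : Finset ℤ := Finset.Icc (1:ℤ) (n-1) with hI
  -- decompositions
  have hSn : S n = (∑ i ∈ I, c (P*i - n)) + c (P*n - n) := by
    have h := hins (n-1) (by omega) (fun i => c (P*i - n))
    rw [sub_add_cancel] at h
    exact h
  have hSn1a : S (n+1) = (∑ i ∈ Finset.Icc (1:ℤ) n, c (P*i - (n+1))) + c (P*(n+1) - (n+1)) :=
    hins n (by omega) (fun i => c (P*i - (n+1)))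
  have hSn1b : (∑ i ∈ Finset.Icc (1:ℤ) n, c (P*i - (n+1)))
      = (∑ i ∈ I, c (P*i - (n+1))) + c (P*n - (n+1)) := by
    have h := hins (n-1) (by omega) (fun i => c (P*i - (n+1)))
    rw [sub_add_cancel] at h
    exact h
  -- termwise relations
  have hT1 : S (n-1) = (∑ i ∈ I, c (P*i - n)) + (∑ i ∈ I, if D ∣ P*i - n then (1:ℤ) else 0) := by
    rw [hS, ← Finset.sum_add_distrib]
    apply Finset.sum_congr rfl
    intro i _
    have h := step (P*i - n)
    rw [show P*i - n + 1 = P*i - (n-1) by ring] at h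
    exact h
  have hT0 : (∑ i ∈ I, c (P*i - n))
      = (∑ i ∈ I, c (P*i - (n+1))) + (∑ i ∈ I, if D ∣ P*i - (n+1) then (1:ℤ) else 0) := by
    rw [← Finset.sum_add_distrib]
    apply Finset.sum_congr rfl
    intro i _
    have h := step (P*i - (n+1))
    rw [show P*i - (n+1) + 1 = P*i - n by ring] at h
    exact h
  have hA0 : 0 ≤ ∑ i ∈ I, if D ∣ P*i - n then (1:ℤ) else 0 :=
    Finset.sum_nonneg fun i _ => by split <;> norm_num
  have hB1 : (∑ i ∈ I, if D ∣ P*i - (n+1) then (1:ℤ) else 0) ≤ 1 := by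
    rw [Finset.sum_boole]
    have hcard : (I.filter (fun i => D ∣ P*i - (n+1))).card ≤ 1 := by
      apply Finset.card_le_one.mpr
      intro a ha b hb
      simp only [Finset.mem_filter, hI, Finset.mem_Icc] at ha hb
      obtain ⟨⟨ha1, ha2⟩, hda⟩ := ha
      obtain ⟨⟨hb1, hb2⟩, hdb⟩ := hb
      have hdvd : D ∣ P * (a - b) := by
        have := dvd_sub hda hdb
        rwa [show P*a - (n+1) - (P*b - (n+1)) = P*(a-b) by ring] at this
      have hco : IsCoprime D P := Nat.isCoprime_iff_coprime.mpr hcop.symm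
      have hdvd' : D ∣ a - b := hco.dvd_of_dvd_mul_left hdvd
      rcases lt_trichotomy a b with h | h | h
      · exfalso
        have hdvd'' : D ∣ b - a := by
          rw [show b - a = -(a-b) by ring]; exact dvd_neg.mpr hdvd'
        have := Int.le_of_dvd (by omega) hdvd''
        omega
      · exact h
      · exfalso
        have := Int.le_of_dvd (by omega) hdvd'
        omega
    exact_mod_cast hcard
  -- boundary
  have hb1' : c (P*n - n) ≤ c (P*n - (n+1)) + 1 := by
    have h := step (P*n - (n+1))
    rw [show P*n - (n+1) + 1 = P*n - n by ring] at h
    rw [h]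
    split <;> omega
  have hb2' : c (P*n - n) + 3 ≤ c (P*(n+1) - (n+1)) := by
    have h := hb2
    rw [show (P-1)*n = P*n - n by ring, show (P-1)*(n+1) = P*(n+1) - (n+1) by ring] at h
    exact h
  have hint : 2 * S n < S (n-1) + S (n+1) := by
    rw [hSn, hSn1a, hSn1b, hT1, hT0]
    linarith
  -- conclude in ℚ
  have hp1 : (0:ℚ) < 1/((p:ℚ)-1) := by
    have h2 : (1:ℚ) < p := by exact_mod_cast (by omega : 1 < p)
    have h3 : (0:ℚ) < (p:ℚ) - 1 := by linarith
    positivity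
  rw [hQ n, hQ (n-1), hQ (n+1)]
  have hcast : ((2 * S n : ℤ):ℚ) < ((S (n-1) + S (n+1) : ℤ):ℚ) := by exact_mod_cast hint
  push_cast at hcast
  nlinarith [mul_lt_mul_of_pos_left hcast hp1]
end

section
/- Let p > 3·lcm(d,e). Then the arithmetic polygon of [-e,d], i.e. the piecewise-linear function through the points (k, p_{[-e,d]}(k)) for k = 0,...,d+e, is convex; moreover, (k, p_{[-e,d]}(k)) with 0 < k < d+e is a vertex (point of strict convexity) if and only if the minimum defining p_{[-e,d]}(k) is attained at exactly one pair of I_k. -/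
/-- The set `V_k` of minimizers in `I_k`, where `v` is the minimum value `p_{[-e,d]}(k)`. -/
noncomputable def Vmin (p d e : ℕ) (k : ℤ) (v : ℚ) : Set (ℤ × ℤ) :=
  {q ∈ Ik d e k | Qfn p e q.1 + Qfn p d q.2 = v}

namespace ArithmeticPolygon

open Finset

noncomputable def ceilSum (p d : ℕ) (n : ℤ) : ℤ := ∑ i ∈ Icc 1 n, ⌈((p : ℚ) * i - n) / d⌉

lemma Qfn_eq_ceilSum_div (p d : ℕ) (n : ℤ) : Qfn p d n = ceilSum p d n / ((p : ℚ) - 1) := by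
  rw [Qfn, ceilSum]
  push_cast
  ring

variable {d : ℕ}

lemma ceil_add_one_div (hd : 0 < d) (y : ℤ) : ⌈((y : ℚ) + 1) / d⌉ = ⌊(y : ℚ) / d⌋ + 1 := by
  have hd' : (0 : ℚ) < d := by exact_mod_cast hd
  rw [Int.ceil_eq_iff]
  push_cast
  constructor
  · have := Int.floor_le ((y : ℚ) / d)
    have : (y : ℚ) / d < (y + 1) / d := by gcongr; linarith
    linarith
  · have hlt : y < d * (⌊(y : ℚ) / d⌋ + 1) := by
      have := Int.lt_floor_add_one ((y : ℚ) / d)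
      rw [div_lt_iff₀ hd'] at this
      exact_mod_cast (by linarith : (y : ℚ) < d * (⌊(y : ℚ) / d⌋ + 1))
    rw [div_le_iff₀ hd']
    have : (y : ℚ) + 1 ≤ d * (⌊(y : ℚ) / d⌋ + 1) := by exact_mod_cast hlt
    linarith

lemma ceil_add_one_div_sub_ceil_div (hd : 0 < d) (y : ℤ) :
    ⌈((y : ℚ) + 1) / d⌉ - ⌈(y : ℚ) / d⌉ = if (d : ℤ) ∣ y then 1 else 0 := by
  have hd' : (d : ℚ) ≠ 0 := by exact_mod_cast hd.ne'
  rw [ceil_add_one_div hd]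
  split_ifs with h
  · obtain ⟨t, rfl⟩ := h
    push_cast
    rw [mul_div_cancel_left₀ _ hd', Int.floor_intCast, Int.ceil_intCast]
    ring
  · rw [(Int.ceil_eq_floor_add_one_iff_notMem _).2]
    · ring
    rintro ⟨t, ht⟩
    exact h ⟨t, by rw [eq_div_iff hd'] at ht; exact_mod_cast ht.symm.trans (mul_comm _ _)⟩

variable {p : ℕ}

lemma card_filter_dvd_mul_sub_le_one (hpd : p.Coprime d) {n : ℤ} (hnd : n ≤ d) (c : ℤ) :
    #{i ∈ Icc 1 n | (d : ℤ) ∣ p * i - c} ≤ 1 := by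
  rw [card_le_one]
  intro i hi j hj
  simp only [mem_filter, mem_Icc] at hi hj
  have hdvd : (d : ℤ) ∣ i - j := by
    exact (Nat.isCoprime_iff_coprime.2 hpd.symm).dvd_of_dvd_mul_left
      (by simpa [mul_sub] using dvd_sub hi.2 hj.2)
  by_contra hne
  have := Int.le_of_dvd (abs_pos.2 (sub_ne_zero.2 hne)) ((dvd_abs _ _).2 hdvd)
  have : |i - j| < n := abs_sub_lt_iff.2 ⟨by omega, by omega⟩
  omega

lemma ceilSum_succ_sub (hd : 0 < d) {n : ℤ} (hn : 0 ≤ n) :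
    ceilSum p d (n + 1) - ceilSum p d n =
      ⌈((n : ℚ) + 1) * ((p : ℚ) - 1) / d⌉ - #{i ∈ Icc 1 n | (d : ℤ) ∣ p * i - (n + 1)} := by
  have hterm : ∀ i : ℤ, ⌈((p : ℚ) * i - (n + 1 : ℤ)) / d⌉ - ⌈((p : ℚ) * i - n) / d⌉ =
      -(if (d : ℤ) ∣ p * i - (n + 1) then 1 else 0) := by
    intro i
    rw [← ceil_add_one_div_sub_ceil_div hd]
    push_cast
    ring_nf
  rw [ceilSum, ceilSum, ← insert_Icc_right_eq_Icc_add_one (by omega), sum_insert (by simp),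
    add_sub_assoc, ← sum_sub_distrib, sum_congr rfl fun i _ => hterm i, sum_neg_distrib,
    sum_boole]
  push_cast
  ring_nf

lemma ceil_sub_div_eq_floor_div (hd : 0 < d) (a : ℤ) :
    ⌈((a : ℚ) - d + 1) / d⌉ = ⌊(a : ℚ) / d⌋ := by
  have hd' : (d : ℚ) ≠ 0 := by exact_mod_cast hd.ne'
  have := ceil_add_one_div hd (a - d)
  push_cast at this
  rw [this, sub_div, div_self hd', Int.floor_sub_one]
  ring

lemma floor_mul_div_add_floor_mul_sub_div (hd : 0 < d) (hpd : p.Coprime d) {i : ℤ} (hi : 0 < i)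
    (hid : i < d) : ⌊(p * i : ℚ) / d⌋ + ⌊(p * (d - i) : ℚ) / d⌋ = p - 1 := by
  have hd' : (d : ℚ) ≠ 0 := by exact_mod_cast hd.ne'
  have hnotint : (p * i : ℚ) / d ∉ Set.range Int.cast := by
    rintro ⟨t, ht⟩
    rw [eq_div_iff hd'] at ht
    have hdvd : (d : ℤ) ∣ p * i := ⟨t, by rw [mul_comm (d : ℤ)]; exact_mod_cast ht.symm⟩
    have := Int.le_of_dvd hi ((Nat.isCoprime_iff_coprime.2 hpd.symm).dvd_of_dvd_mul_left hdvd)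
    omega
  have hsplit : (p * (d - i) : ℚ) / d = ((p : ℤ) : ℚ) + -((p * i : ℚ) / d) := by
    push_cast
    field_simp
    ring
  rw [hsplit, Int.floor_intCast_add, Int.floor_neg,
    (Int.ceil_eq_floor_add_one_iff_notMem _).2 hnotint]
  ring

lemma two_mul_ceilSum_sub_one (hd : 0 < d) (hpd : p.Coprime d) :
    2 * ceilSum p d (d - 1) = (d - 1) * (p - 1) := by
  set F : ℤ → ℤ := fun i => ⌊(p * i : ℚ) / d⌋
  have hfloor : ceilSum p d (d - 1) = ∑ i ∈ Icc 1 ((d : ℤ) - 1), F i := by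
    refine sum_congr rfl fun i _ => ?_
    have := ceil_sub_div_eq_floor_div hd (p * i)
    push_cast at this
    rw [show F i = _ from this.symm]
    congr 2
    push_cast
    ring
  have hreflect : ∑ i ∈ Icc 1 ((d : ℤ) - 1), F i = ∑ i ∈ Icc 1 ((d : ℤ) - 1), F (d - i) :=
    sum_nbij' (fun i => d - i) (fun i => d - i) (by intro i; simp; omega)
      (by intro i; simp; omega) (by simp) (by simp) (by simp)
  have hpair : ∀ i ∈ Icc 1 ((d : ℤ) - 1), F i + F (d - i) = p - 1 := by
    intro i hi
    rw [mem_Icc] at hi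
    simpa [F] using floor_mul_div_add_floor_mul_sub_div hd hpd (i := i) (by omega) (by omega)
  rw [two_mul, hfloor]
  nth_rw 2 [hreflect]
  rw [← sum_add_distrib, sum_congr rfl hpair, sum_const, Int.card_Icc, nsmul_eq_mul,
    Int.toNat_of_nonneg (by omega)]
  ring

lemma Qfn_self_sub_one (hp : 1 < p) (hd : 0 < d) (hpd : p.Coprime d) :
    Qfn p d (d - 1) = (d - 1) / 2 := by
  have hp' : (p : ℚ) - 1 ≠ 0 := (sub_pos.2 (by exact_mod_cast hp)).ne'
  have h := congrArg (Int.cast : ℤ → ℚ) (two_mul_ceilSum_sub_one hd hpd)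
  push_cast at h
  rw [Qfn_eq_ceilSum_div, div_eq_iff hp']
  linarith

lemma Qfn_succ_sub_bounds (hp : 1 < p) (hd : 0 < d) (hpd : p.Coprime d) {n : ℤ} (hn : 0 ≤ n)
    (hnd : n ≤ d) :
    (n + 1) / d - 1 / ((p : ℚ) - 1) ≤ Qfn p d (n + 1) - Qfn p d n ∧
      Qfn p d (n + 1) - Qfn p d n < (n + 1) / d + 1 / ((p : ℚ) - 1) := by
  have hp' : (0 : ℚ) < p - 1 := sub_pos.2 (by exact_mod_cast hp)
  have hd' : (d : ℚ) ≠ 0 := by exact_mod_cast hd.ne'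
  set c := #{i ∈ Icc 1 n | (d : ℤ) ∣ p * i - (n + 1)}
  set x : ℚ := ((n : ℚ) + 1) * ((p : ℚ) - 1) / d
  have hc : c ≤ 1 := card_filter_dvd_mul_sub_le_one hpd hnd _
  have hdiff : Qfn p d (n + 1) - Qfn p d n = (⌈x⌉ - c) / ((p : ℚ) - 1) := by
    rw [Qfn_eq_ceilSum_div, Qfn_eq_ceilSum_div, ← sub_div, ← Int.cast_sub,
      ceilSum_succ_sub hd hn]
    push_cast
    rfl
  have hx : (n + 1) / d = x / ((p : ℚ) - 1) := by
    simp only [x]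
    field_simp
  have hc' : (c : ℚ) ≤ 1 := by exact_mod_cast hc
  rw [hdiff, hx, ← sub_div, ← add_div]
  constructor
  · gcongr
    linarith [Int.le_ceil x]
  · gcongr
    linarith [Int.ceil_lt_add_one x, (Nat.cast_nonneg c : (0 : ℚ) ≤ c)]

lemma two_mul_Qfn_lt_add (hd : 0 < d) (hpd : p.Coprime d) (hdp : 2 * d < p) {n : ℤ} (hn : 1 ≤ n)
    (hnd : n < d) : 2 * Qfn p d n < Qfn p d (n - 1) + Qfn p d (n + 1) := by
  have hp' : (0 : ℚ) < p - 1 := by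
    have : (2 * d + 1 : ℚ) ≤ p := by exact_mod_cast hdp
    have : (0 : ℚ) < d := by exact_mod_cast hd
    linarith
  have hgap : 2 / ((p : ℚ) - 1) ≤ 1 / d := by
    rw [div_le_div_iff₀ hp' (by exact_mod_cast hd)]
    have : (2 * d + 1 : ℚ) ≤ p := by exact_mod_cast hdp
    linarith
  have hnext := (Qfn_succ_sub_bounds (by omega) hd hpd (by omega) hnd.le).1
  have hprev := (Qfn_succ_sub_bounds (p := p) (by omega) hd hpd (n := n - 1) (by omega)
    (by omega)).2
  simp only [sub_add_cancel, Int.cast_sub, Int.cast_one] at hprev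
  have : ((n : ℚ) + 1) / d = n / d + 1 / d := by ring
  have : 2 / ((p : ℚ) - 1) = 1 / (p - 1) + 1 / (p - 1) := by ring
  linarith

lemma Qfn_succ_sub_lt_one (hd : 0 < d) (hpd : p.Coprime d) (hdp : d < p) {n : ℤ} (hn : 0 ≤ n)
    (hnd : n + 1 < d) : Qfn p d (n + 1) - Qfn p d n < 1 := by
  have hd' : (0 : ℚ) < d := by exact_mod_cast hd
  have hp' : (d : ℚ) ≤ p - 1 := by
    have : (d + 1 : ℚ) ≤ p := by exact_mod_cast hdp
    linarith
  have hlt := (Qfn_succ_sub_bounds (by omega) hd hpd hn (by omega)).2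
  have h1 : 1 / ((p : ℚ) - 1) ≤ 1 / d := one_div_le_one_div_of_le hd' hp'
  have h2 : ((n : ℚ) + 1) / d ≤ (d - 1) / d := by
    gcongr
    have : n + 1 + 1 ≤ (d : ℤ) := hnd
    have : (n : ℚ) + 1 + 1 ≤ d := by exact_mod_cast this
    linarith
  have h3 : ((d : ℚ) - 1) / d + 1 / d = 1 := by field_simp; ring
  linarith

variable {e : ℕ}

lemma Qfn_succ_sub_lt_Qfn_succ_sub (hd : 0 < d) (he : 0 < e) (hpd : p.Coprime d)
    (hpe : p.Coprime e) (hp : 2 * Nat.lcm d e < p) {m n : ℤ} (hm : 0 ≤ m) (hme : m ≤ e)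
    (hn : 0 ≤ n) (hnd : n ≤ d) (hmn : d * (m + 1) < e * (n + 1)) :
    Qfn p e (m + 1) - Qfn p e m < Qfn p d (n + 1) - Qfn p d n := by
  have hd' : (0 : ℚ) < d := by exact_mod_cast hd
  have he' : (0 : ℚ) < e := by exact_mod_cast he
  have hlcm : (0 : ℚ) < Nat.lcm d e := by exact_mod_cast Nat.lcm_pos hd he
  have hp' : (2 * Nat.lcm d e : ℚ) ≤ p - 1 := by
    have : (2 * Nat.lcm d e + 1 : ℚ) ≤ p := by exact_mod_cast hp
    linarith
  have hgcd : (Nat.gcd d e : ℤ) ≤ e * (n + 1) - d * (m + 1) :=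
    Int.le_of_dvd (by omega) (dvd_sub
      (dvd_mul_of_dvd_left (Int.natCast_dvd_natCast.2 (Nat.gcd_dvd_right d e)) _)
      (dvd_mul_of_dvd_left (Int.natCast_dvd_natCast.2 (Nat.gcd_dvd_left d e)) _))
  have hgl : (Nat.gcd d e : ℚ) * Nat.lcm d e = d * e := by exact_mod_cast Nat.gcd_mul_lcm d e
  have hgap : 2 / ((p : ℚ) - 1) ≤ ((n : ℚ) + 1) / d - (m + 1) / e := by
    rw [div_sub_div _ _ hd'.ne' he'.ne', div_le_div_iff₀ (by linarith) (by positivity)]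
    have : (Nat.gcd d e : ℚ) ≤ e * (n + 1) - d * (m + 1) := by exact_mod_cast hgcd
    nlinarith
  have hp1 : 1 < p := by have := Nat.lcm_pos hd he; omega
  have hQ := (Qfn_succ_sub_bounds hp1 hd hpd hn hnd).1
  have hP := (Qfn_succ_sub_bounds hp1 he hpe hm hme).2
  have : 2 / ((p : ℚ) - 1) = 1 / (p - 1) + 1 / (p - 1) := by ring
  linarith

lemma Qfn_zero (p d : ℕ) : Qfn p d 0 = 0 := by
  simp [Qfn]

lemma Qfn_one_pos (hp : 1 < p) (hd : 0 < d) : 0 < Qfn p d 1 := by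
  have hp' : (0 : ℚ) < p - 1 := sub_pos.2 (by exact_mod_cast hp)
  have hceil : (0 : ℚ) < ⌈((p : ℚ) - 1) / d⌉ := by
    have : (0 : ℚ) < d := by exact_mod_cast hd
    exact Int.cast_pos.2 (Int.ceil_pos.2 (div_pos hp' this))
  simp only [Qfn, Icc_self, sum_singleton, Int.cast_one, mul_one]
  positivity

lemma mem_Ik_iff (hd : 0 < d) (he : 0 < e) {k : ℤ} {q : ℤ × ℤ} :
    q ∈ Ik d e k ↔ q.1 + q.2 + 1 = k ∧ -(d : ℤ) ≤ d * q.1 - e * q.2 ∧ d * q.1 - e * q.2 ≤ e ∧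
      0 ≤ q.1 ∧ q.1 < e ∧ 0 ≤ q.2 ∧ q.2 < d := by
  have hde : (0 : ℚ) < d * e := by positivity
  have hband : (q.1 : ℚ) / e - q.2 / d = ((d * q.1 - e * q.2 : ℤ) : ℚ) / (d * e) := by
    push_cast
    field_simp
  have hlow : -(1 : ℚ) / e = ((-d : ℤ) : ℚ) / (d * e) := by
    push_cast
    field_simp
  have hup : (1 : ℚ) / d = ((e : ℤ) : ℚ) / (d * e) := by
    push_cast
    field_simp
  simp only [Ik, Set.mem_ofPred_eq, hband, hlow, hup, div_le_div_iff_of_pos_right hde, Int.cast_le]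

lemma Ik_one (hd : 0 < d) (he : 0 < e) : Ik d e 1 = {(0, 0)} := by
  ext q
  rw [mem_Ik_iff hd he, Set.mem_singleton_iff, Prod.ext_iff]
  constructor
  · intro h
    omega
  · rintro ⟨h1, h2⟩
    simp only [h1, h2]
    omega

lemma Ik_top (hd : 0 < d) (he : 0 < e) : Ik d e (d + e - 1) = {((e : ℤ) - 1, (d : ℤ) - 1)} := by
  ext q
  rw [mem_Ik_iff hd he, Set.mem_singleton_iff, Prod.ext_iff]
  constructor
  · intro h
    omega
  · rintro ⟨h1, h2⟩
    simp only [h1, h2]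
    refine ⟨?_, ?_, ?_, ?_, ?_, ?_, ?_⟩ <;> linarith

lemma eq_of_mem_Ik_of_lt (hd : 0 < d) (he : 0 < e) {k : ℤ} {q q' : ℤ × ℤ} (hq : q ∈ Ik d e k)
    (hq' : q' ∈ Ik d e k) (hlt : q.1 < q'.1) :
    q' = (q.1 + 1, q.2 - 1) ∧ d * q.1 - e * q.2 = -(d : ℤ) := by
  rw [mem_Ik_iff hd he] at hq hq'
  have ht : q'.1 - q.1 ≤ 1 := by
    by_contra! ht
    nlinarith
  refine ⟨Prod.ext (by omega) (by simp only; omega), ?_⟩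
  have h1 : q'.1 = q.1 + 1 := by omega
  have h2 : q'.2 = q.2 - 1 := by omega
  rw [h1, h2] at hq'
  linarith

lemma fst_le_fst_le_add_two_of_mem_Ik (hd : 0 < d) (he : 0 < e) {k : ℤ} {q₁ q₂ : ℤ × ℤ}
    (h₁ : q₁ ∈ Ik d e (k - 1)) (h₂ : q₂ ∈ Ik d e (k + 1)) :
    q₁.1 ≤ q₂.1 ∧ q₂.1 ≤ q₁.1 + 2 := by
  rw [mem_Ik_iff hd he] at h₁ h₂
  constructor
  · by_contra! h
    nlinarith
  · by_contra! h
    nlinarith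

noncomputable def pqValue (p d e : ℕ) (q : ℤ × ℤ) : ℚ := Qfn p e q.1 + Qfn p d q.2

variable {k : ℤ}

lemma pqValue_le_of_mem_lowerBounds {b : ℚ} (hb : b ∈ lowerBounds (Vals p d e k)) {q : ℤ × ℤ}
    (hq : q ∈ Ik d e k) : b ≤ pqValue p d e q :=
  hb ⟨q, hq, rfl⟩

lemma exists_two_mul_pqValue_lt_or_balanced (hd : 0 < d) (he : 0 < e) (hpd : p.Coprime d)
    (hpe : p.Coprime e) (hp : 2 * Nat.lcm d e < p) {q₁ q₂ : ℤ × ℤ} (h₁ : q₁ ∈ Ik d e (k - 1))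
    (h₂ : q₂ ∈ Ik d e (k + 1)) :
    (∃ r ∈ Ik d e k, 2 * pqValue p d e r < pqValue p d e q₁ + pqValue p d e q₂) ∨
      (q₂ = (q₁.1 + 1, q₁.2 + 1) ∧ (q₁.1 + 1, q₁.2) ∈ Ik d e k ∧ (q₁.1, q₁.2 + 1) ∈ Ik d e k) := by
  have hdl := Nat.le_of_dvd (Nat.lcm_pos hd he) (Nat.dvd_lcm_left d e)
  have hel := Nat.le_of_dvd (Nat.lcm_pos hd he) (Nat.dvd_lcm_right d e)
  obtain ⟨hfst, hfst'⟩ := fst_le_fst_le_add_two_of_mem_Ik hd he h₁ h₂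
  obtain ⟨m, n⟩ := q₁
  obtain ⟨m', n'⟩ := q₂
  simp only at hfst hfst' ⊢
  rw [mem_Ik_iff hd he] at h₁ h₂
  simp only at h₁ h₂
  simp only [mem_Ik_iff hd he, pqValue]
  -- `q₂ - q₁` is `(0, 2)`, `(1, 1)` or `(2, 0)`. In the diagonal case the band value `d m - e n`
  -- decides which lattice midpoint lies in `I_k`; both do exactly when it equals `e - d`.
  rcases (by omega : m' = m ∨ m' = m + 1 ∨ m' = m + 2) with hm | hm | hm <;> subst m'
  · obtain rfl : n' = n + 2 := by omega
    have := two_mul_Qfn_lt_add (p := p) hd hpd (by omega) (n := n + 1) (by omega) (by omega)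
    rw [add_sub_cancel_right, add_assoc, one_add_one_eq_two] at this
    refine .inl ⟨(m, n + 1), ⟨?_, ?_, ?_, ?_, ?_, ?_, ?_⟩, ?_⟩ <;> linarith
  · obtain rfl : n' = n + 1 := by omega
    rcases lt_trichotomy (d * m - e * n) (e - d) with hb | hb | hb
    · have := Qfn_succ_sub_lt_Qfn_succ_sub hd he hpd hpe hp (m := m) (n := n) (by omega)
        (by omega) (by omega) (by omega) (by linarith)
      refine .inl ⟨(m + 1, n), ⟨?_, ?_, ?_, ?_, ?_, ?_, ?_⟩, ?_⟩ <;> linarith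
    · refine .inr ⟨rfl, ⟨?_, ?_, ?_, ?_, ?_, ?_, ?_⟩, ⟨?_, ?_, ?_, ?_, ?_, ?_, ?_⟩⟩ <;> linarith
    · have := Qfn_succ_sub_lt_Qfn_succ_sub he hd hpe hpd (by rwa [Nat.lcm_comm]) (m := n) (n := m)
        (by omega) (by omega) (by omega) (by omega) (by linarith)
      refine .inl ⟨(m, n + 1), ⟨?_, ?_, ?_, ?_, ?_, ?_, ?_⟩, ?_⟩ <;> linarith
  · obtain hn : n' = n := by omega
    subst n'
    have := two_mul_Qfn_lt_add (p := p) he hpe (by omega) (n := m + 1) (by omega) (by omega)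
    rw [add_sub_cancel_right, add_assoc, one_add_one_eq_two] at this
    refine .inl ⟨(m + 1, n), ⟨?_, ?_, ?_, ?_, ?_, ?_, ?_⟩, ?_⟩ <;> linarith

variable {a b c : ℚ}

lemma strict_or_two_minimizers (hd : 0 < d) (he : 0 < e) (hpd : p.Coprime d)
    (hpe : p.Coprime e) (hp : 2 * Nat.lcm d e < p) (ha : a ∈ Vals p d e (k - 1))
    (hb : b ∈ lowerBounds (Vals p d e k)) (hc : c ∈ Vals p d e (k + 1)) :
    2 * b < a + c ∨
      (2 * b ≤ a + c ∧ ∃ r ∈ Vmin p d e k b, ∃ r' ∈ Vmin p d e k b, r.1 < r'.1) := by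
  obtain ⟨q₁, h₁, rfl⟩ : a ∈ pqValue p d e '' Ik d e (k - 1) := ha
  obtain ⟨q₂, h₂, rfl⟩ : c ∈ pqValue p d e '' Ik d e (k + 1) := hc
  rcases exists_two_mul_pqValue_lt_or_balanced hd he hpd hpe hp h₁ h₂ with
    ⟨r, hr, hlt⟩ | ⟨rfl, hr, hr'⟩
  · have := pqValue_le_of_mem_lowerBounds hb hr
    exact .inl (by linarith)
  · have hsum : pqValue p d e (q₁.1 + 1, q₁.2) + pqValue p d e (q₁.1, q₁.2 + 1) =
        pqValue p d e q₁ + pqValue p d e (q₁.1 + 1, q₁.2 + 1) := by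
      simp only [pqValue]
      ring
    have hle := pqValue_le_of_mem_lowerBounds hb hr
    have hle' := pqValue_le_of_mem_lowerBounds hb hr'
    have hle2 : 2 * b ≤ pqValue p d e q₁ + pqValue p d e (q₁.1 + 1, q₁.2 + 1) := by linarith
    rcases hle2.lt_or_eq with hlt | heq
    · exact .inl hlt
    refine .inr ⟨heq.le, _, ⟨hr', ?_⟩, _, ⟨hr, ?_⟩, by simp⟩
    · exact (by linarith : pqValue p d e (q₁.1, q₁.2 + 1) = b)
    · exact (by linarith : pqValue p d e (q₁.1 + 1, q₁.2) = b)

lemma add_le_two_mul_of_two_minimizers (hd : 0 < d) (he : 0 < e)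
    (ha : a ∈ lowerBounds (Vals p d e (k - 1))) (hc : c ∈ lowerBounds (Vals p d e (k + 1)))
    {r r' : ℤ × ℤ} (hr : r ∈ Vmin p d e k b) (hr' : r' ∈ Vmin p d e k b) (hlt : r.1 < r'.1) :
    a + c ≤ 2 * b := by
  obtain ⟨rfl, hband⟩ := eq_of_mem_Ik_of_lt hd he hr.1 hr'.1 hlt
  have hrI := (mem_Ik_iff hd he).1 hr.1
  have hrI' := (mem_Ik_iff hd he).1 hr'.1
  simp only at hrI'
  have hprev : (r.1, r.2 - 1) ∈ Ik d e (k - 1) := by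
    rw [mem_Ik_iff hd he]
    refine ⟨?_, ?_, ?_, ?_, ?_, ?_, ?_⟩ <;> simp only <;> linarith
  have hnext : (r.1 + 1, r.2) ∈ Ik d e (k + 1) := by
    rw [mem_Ik_iff hd he]
    refine ⟨?_, ?_, ?_, ?_, ?_, ?_, ?_⟩ <;> simp only <;> linarith
  have hsum : pqValue p d e (r.1, r.2 - 1) + pqValue p d e (r.1 + 1, r.2) =
      pqValue p d e r + pqValue p d e (r.1 + 1, r.2 - 1) := by
    simp only [pqValue]
    ring
  have hrb : pqValue p d e r = b := hr.2
  have hrb' : pqValue p d e (r.1 + 1, r.2 - 1) = b := hr'.2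
  linarith [pqValue_le_of_mem_lowerBounds ha hprev, pqValue_le_of_mem_lowerBounds hc hnext]

lemma ncard_eq_one_iff_of_subset_Ik {S : Set (ℤ × ℤ)} (hS : S ⊆ Ik d e k) (hne : S.Nonempty) :
    S.ncard = 1 ↔ ¬∃ r ∈ S, ∃ r' ∈ S, r.1 < r'.1 := by
  constructor
  · rintro h ⟨r, hr, r', hr', hlt⟩
    obtain ⟨x, rfl⟩ := Set.ncard_eq_one.1 h
    rw [Set.mem_singleton_iff] at hr hr'
    subst hr hr'
    exact lt_irrefl _ hlt
  · intro h
    obtain ⟨x, hx⟩ := hne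
    refine Set.ncard_eq_one.2 ⟨x, Set.eq_singleton_iff_unique_mem.2 ⟨hx, fun y hy => ?_⟩⟩
    rcases lt_trichotomy y.1 x.1 with hlt | heq | hlt
    · exact absurd ⟨y, hy, x, hx, hlt⟩ h
    · have := (hS hy).1
      have := (hS hx).1
      exact Prod.ext heq (by omega)
    · exact absurd ⟨x, hx, y, hy, hlt⟩ h

lemma convex_and_vertex_iff (hd : 0 < d) (he : 0 < e) (hpd : p.Coprime d) (hpe : p.Coprime e)
    (hp : 2 * Nat.lcm d e < p) (ha : IsLeast (Vals p d e (k - 1)) a)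
    (hb : IsLeast (Vals p d e k) b) (hc : IsLeast (Vals p d e (k + 1)) c) :
    2 * b ≤ a + c ∧ (2 * b < a + c ↔ (Vmin p d e k b).ncard = 1) := by
  have hne : (Vmin p d e k b).Nonempty := by
    obtain ⟨q, hq, hqb⟩ := hb.1
    exact ⟨q, hq, hqb⟩
  rw [ncard_eq_one_iff_of_subset_Ik (S := Vmin p d e k b) (Set.sep_subset _ _) hne]
  have htwo : ∀ r ∈ Vmin p d e k b, ∀ r' ∈ Vmin p d e k b, r.1 < r'.1 → a + c ≤ 2 * b :=
    fun r hr r' hr' => add_le_two_mul_of_two_minimizers hd he ha.2 hc.2 hr hr'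
  rcases strict_or_two_minimizers hd he hpd hpe hp ha.1 hb.2 hc.1 with
    hlt | ⟨hle, r, hr, r', hr', hrr'⟩
  · refine ⟨hlt.le, iff_of_true hlt ?_⟩
    rintro ⟨r, hr, r', hr', hrr'⟩
    exact (htwo r hr r' hr' hrr').not_gt hlt
  · exact ⟨hle, iff_of_false (htwo r hr r' hr' hrr').not_gt (not_not.2 ⟨r, hr, r', hr', hrr'⟩)⟩

lemma _root_.IsPval.isLeast {v : ℚ} (h : IsPval p d e k v) (hk : 1 ≤ k) (hk' : k < d + e) :
    IsLeast (Vals p d e k) v := by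
  rcases h with ⟨rfl, -⟩ | ⟨rfl, -⟩ | ⟨-, -, h⟩
  · omega
  · omega
  · exact h

lemma _root_.IsPval.eq_zero {v : ℚ} (h : IsPval p d e 0 v) : v = 0 := by
  rcases h with ⟨-, rfl⟩ | ⟨hde, rfl⟩ | ⟨h, -⟩
  · rfl
  · have hd : d = 0 := by omega
    have he : e = 0 := by omega
    simp [hd, he]
  · omega

lemma _root_.IsPval.eq_half {v : ℚ} (h : IsPval p d e (d + e) v) : v = (d + e) / 2 := by
  rcases h with ⟨hde, rfl⟩ | ⟨-, rfl⟩ | ⟨-, h, -⟩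
  · have hd : d = 0 := by omega
    have he : e = 0 := by omega
    simp [hd, he]
  · rfl
  · omega

lemma _root_.IsPval.pos_of_two (hp : 1 < p) (hd : 0 < d) (he : 0 < e) (h : IsPval p d e 2 c) :
    0 < c := by
  rcases h with ⟨h, -⟩ | ⟨hde, rfl⟩ | ⟨-, -, h⟩
  · omega
  · have : (d : ℚ) + e = 2 := by exact_mod_cast hde.symm
    rw [this]
    norm_num
  · obtain ⟨⟨m, n⟩, hq, rfl⟩ := h.1
    rw [mem_Ik_iff hd he] at hq
    rcases (by omega : m = 0 ∧ n = 1 ∨ m = 1 ∧ n = 0) with ⟨rfl, rfl⟩ | ⟨rfl, rfl⟩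
    · simpa [pqValue, Qfn_zero] using Qfn_one_pos hp hd
    · simpa [pqValue, Qfn_zero] using Qfn_one_pos hp he

lemma eq_pqValue_of_Ik_eq_singleton {q : ℤ × ℤ} (hI : Ik d e k = {q}) (hb : b ∈ Vals p d e k) :
    b = pqValue p d e q := by
  obtain ⟨q', hq', rfl⟩ := hb
  rw [hI, Set.mem_singleton_iff] at hq'
  rw [hq']
  rfl

lemma ncard_Vmin_eq_one_of_Ik_eq_singleton {q : ℤ × ℤ} (hI : Ik d e k = {q})
    (hb : b ∈ Vals p d e k) : (Vmin p d e k b).ncard = 1 := by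
  have hq : q ∈ Ik d e k := hI ▸ rfl
  refine Set.ncard_eq_one.2 ⟨q, Set.eq_singleton_iff_unique_mem.2 ⟨?_, fun r hr => ?_⟩⟩
  · exact ⟨hq, (eq_pqValue_of_Ik_eq_singleton hI hb).symm⟩
  · simpa [hI] using hr.1

lemma strict_convex_at_one (hp : 1 < p) (hd : 0 < d) (he : 0 < e) (ha : IsPval p d e 0 a)
    (hb : IsPval p d e 1 b) (hc : IsPval p d e 2 c) :
    2 * b < a + c ∧ (Vmin p d e 1 b).ncard = 1 := by
  have hb' := (hb.isLeast le_rfl (by omega)).1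
  have hb0 : b = 0 := by
    simpa [pqValue, Qfn_zero] using eq_pqValue_of_Ik_eq_singleton (Ik_one hd he) hb'
  refine ⟨?_, ncard_Vmin_eq_one_of_Ik_eq_singleton (Ik_one hd he) hb'⟩
  rw [ha.eq_zero, hb0]
  linarith [hc.pos_of_two hp hd he]

lemma strict_convex_at_top (hd : 0 < d) (he : 0 < e) (hpd : p.Coprime d) (hpe : p.Coprime e)
    (hdp : d < p) (hep : e < p) (hk : k + 1 = d + e) (hk₂ : 2 ≤ k) (ha : IsPval p d e (k - 1) a)
    (hb : IsPval p d e k b) (hc : IsPval p d e (k + 1) c) :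
    2 * b < a + c ∧ (Vmin p d e k b).ncard = 1 := by
  have hItop : Ik d e k = {((e : ℤ) - 1, (d : ℤ) - 1)} := by
    rw [show k = d + e - 1 by omega, Ik_top hd he]
  have hb' := (hb.isLeast (by omega) (by omega)).1
  have hb_eq : b = (e - 1) / 2 + (d - 1) / 2 := by
    rw [eq_pqValue_of_Ik_eq_singleton hItop hb', pqValue, Qfn_self_sub_one (by omega) he hpe,
      Qfn_self_sub_one (by omega) hd hpd]
  have hc_eq : c = (d + e) / 2 := by
    rw [hk] at hc
    exact hc.eq_half
  have ha_gt : (e - 1) / 2 + (d - 1) / 2 - 1 < a := by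
    obtain ⟨⟨m, n⟩, hq, rfl⟩ := (ha.isLeast (by omega) (by omega)).1
    rw [mem_Ik_iff hd he] at hq
    rcases (by omega : m = e - 1 ∧ n = d - 2 ∨ m = e - 2 ∧ n = d - 1) with ⟨rfl, rfl⟩ | ⟨rfl, rfl⟩
    · have := Qfn_succ_sub_lt_one hd hpd hdp (n := d - 2) (by omega) (by omega)
      rw [show (d : ℤ) - 2 + 1 = d - 1 by ring, Qfn_self_sub_one (by omega) hd hpd] at this
      have := Qfn_self_sub_one (by omega) he hpe
      push_cast at *
      linarith
    · have := Qfn_succ_sub_lt_one he hpe hep (n := e - 2) (by omega) (by omega)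
      rw [show (e : ℤ) - 2 + 1 = e - 1 by ring, Qfn_self_sub_one (by omega) he hpe] at this
      have := Qfn_self_sub_one (by omega) hd hpd
      push_cast at *
      linarith
  refine ⟨?_, ncard_Vmin_eq_one_of_Ik_eq_singleton hItop hb'⟩
  rw [hb_eq, hc_eq]
  linarith

end ArithmeticPolygon

open ArithmeticPolygon in
theorem stmt9_general (p d e : ℕ) (hd : 0 < d) (he : 0 < e)
    (hcop : Nat.Coprime p (Nat.lcm d e)) (hpD : 3 * Nat.lcm d e < p)
    (f : ℤ → ℚ) (hf : ∀ k : ℤ, 0 ≤ k → k ≤ (d : ℤ) + e → IsPval p d e k (f k)) :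
    (∀ k : ℤ, 0 < k → k < (d : ℤ) + e → 2 * f k ≤ f (k - 1) + f (k + 1)) ∧
      (∀ k : ℤ, 0 < k → k < (d : ℤ) + e →
        (2 * f k < f (k - 1) + f (k + 1) ↔ (Vmin p d e k (f k)).ncard = 1)) := by
  have hdl := Nat.le_of_dvd (Nat.lcm_pos hd he) (Nat.dvd_lcm_left d e)
  have hel := Nat.le_of_dvd (Nat.lcm_pos hd he) (Nat.dvd_lcm_right d e)
  have hpd : p.Coprime d := hcop.coprime_dvd_right (Nat.dvd_lcm_left d e)
  have hpe : p.Coprime e := hcop.coprime_dvd_right (Nat.dvd_lcm_right d e)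
  have key : ∀ k : ℤ, 0 < k → k < (d : ℤ) + e → 2 * f k ≤ f (k - 1) + f (k + 1) ∧
      (2 * f k < f (k - 1) + f (k + 1) ↔ (Vmin p d e k (f k)).ncard = 1) := by
    intro k hk hk'
    have ha := hf (k - 1) (by omega) (by omega)
    have hb := hf k (by omega) (by omega)
    have hc := hf (k + 1) (by omega) (by omega)
    rcases (by omega : k = 1 ∨ (2 ≤ k ∧ k + 1 = d + e) ∨ (2 ≤ k ∧ k + 2 ≤ d + e)) with
      rfl | ⟨hk₂, hktop⟩ | ⟨hk₂, hk₃⟩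
    · obtain ⟨hlt, hcard⟩ := strict_convex_at_one (by omega) hd he ha hb hc
      exact ⟨hlt.le, iff_of_true hlt hcard⟩
    · obtain ⟨hlt, hcard⟩ :=
        strict_convex_at_top hd he hpd hpe (by omega) (by omega) hktop hk₂ ha hb hc
      exact ⟨hlt.le, iff_of_true hlt hcard⟩
    · exact convex_and_vertex_iff hd he hpd hpe (by omega) (ha.isLeast (by omega) (by omega))
        (hb.isLeast (by omega) (by omega)) (hc.isLeast (by omega) (by omega))
  exact ⟨fun k hk hk' => (key k hk hk').1, fun k hk hk' => (key k hk hk').2⟩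

/-- Let `p > 3·lcm(d,e)`.  The arithmetic polygon of `[-e,d]`, i.e. the piecewise linear
function through `(k, p_{[-e,d]}(k))`, `k = 0, …, d+e`, is convex; moreover
`(k, p_{[-e,d]}(k))` with `0 < k < d+e` is a vertex (point of strict convexity) if and
only if the minimum defining `p_{[-e,d]}(k)` is attained at exactly one pair of `I_k`. -/
theorem stmt9 (p d e : ℕ) (hp : p.Prime) (hd : 0 < d) (he : 0 < e)
    (hcop : Nat.Coprime p (Nat.lcm d e)) (hpD : 3 * Nat.lcm d e < p)
    (f : ℤ → ℚ) (hf : ∀ k : ℤ, 0 ≤ k → k ≤ (d : ℤ) + e → IsPval p d e k (f k)) :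
    (∀ k : ℤ, 0 < k → k < (d : ℤ) + e → 2 * f k ≤ f (k - 1) + f (k + 1)) ∧
      (∀ k : ℤ, 0 < k → k < (d : ℤ) + e →
        (2 * f k < f (k - 1) + f (k + 1) ↔ (Vmin p d e k (f k)).ncard = 1)) :=
  stmt9_general p d e hd he hcop hpD f hf
end

section
/- Let r_{i_1} > r_{i_2} > ... > r_{i_n} be distinct positive integers with r_{i_1} ≤ n + d and hence r_{i_j} ≤ n + d + 1 - j for all j. If τ is a bijection of {1,...,n} with integer values τ(j) ≤ n such that τ(i_j) ≥ r_{i_j} - d for all j, and τ(i_{j_0}) ≠ n+1-j_0 for some j_0, then for the least such j_0 one has r_{i_{j_0}} - τ(i_{j_0}) > r_{i_j} - (n+1-j) for all j ≥ j_0. -/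
/-- Let `r_{i_1} > ⋯ > r_{i_n}` be distinct integers in `[1, n+d]` (hence
`r_{i_j} ≤ n+d+1-j`), written as `r j := r_{i_j}`, and let `σ j := τ(i_j)` come
from a bijection `τ` of the index set onto `{1,…,n}` with `τ(i_j) ≥ r_{i_j} - d`.
If `σ(j₀) ≠ n+1-j₀` for the least such `j₀`, then
`r j₀ - σ j₀ > r j - (n+1-j)` for all `j ≥ j₀`. -/
theorem stmt13 (d n : ℕ) (hd : 0 < d) (hn : 0 < n) (r σ : ℕ → ℤ)
    (hr_anti : ∀ j₁ ∈ Finset.Icc 1 n, ∀ j₂ ∈ Finset.Icc 1 n, j₁ < j₂ → r j₂ < r j₁)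
    (hr_pos : ∀ j ∈ Finset.Icc 1 n, 1 ≤ r j)
    (hr1 : r 1 ≤ (n : ℤ) + d)
    (hinj : ∀ j₁ ∈ Finset.Icc 1 n, ∀ j₂ ∈ Finset.Icc 1 n, σ j₁ = σ j₂ → j₁ = j₂)
    (hrange : ∀ j ∈ Finset.Icc 1 n, 1 ≤ σ j ∧ σ j ≤ (n : ℤ))
    (hlb : ∀ j ∈ Finset.Icc 1 n, r j - d ≤ σ j)
    (j₀ : ℕ) (hj₀ : j₀ ∈ Finset.Icc 1 n) (hne : σ j₀ ≠ (n : ℤ) + 1 - j₀)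
    (hleast : ∀ j ∈ Finset.Icc 1 n, j < j₀ → σ j = (n : ℤ) + 1 - j) :
    ∀ j ∈ Finset.Icc 1 n, j₀ ≤ j → r j - ((n : ℤ) + 1 - j) < r j₀ - σ j₀ := by
  rw [Finset.mem_Icc] at hj₀
  have hσlt : σ j₀ < (n:ℤ) + 1 - j₀ := by
    by_contra h
    push_neg at h
    have h1 : (n:ℤ) + 1 - j₀ < σ j₀ := lt_of_le_of_ne h (Ne.symm hne)
    have h2 : σ j₀ ≤ (n:ℤ) := (hrange j₀ (Finset.mem_Icc.mpr hj₀)).2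
    set k : ℕ := ((n:ℤ) + 1 - σ j₀).toNat with hk
    have hk1 : (k:ℤ) = (n:ℤ) + 1 - σ j₀ := by
      rw [hk, Int.toNat_of_nonneg]; linarith
    have hklt : k < j₀ := by
      have : (k:ℤ) < (j₀:ℤ) := by rw [hk1]; push_cast; linarith
      exact_mod_cast this
    have hkmem : k ∈ Finset.Icc 1 n := by
      rw [Finset.mem_Icc]
      constructor
      · have : (1:ℤ) ≤ (k:ℤ) := by rw [hk1]; linarith
        exact_mod_cast this
      · omega
    have hσk := hleast k hkmem hklt
    have : σ k = σ j₀ := by rw [hσk, hk1]; ring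
    have := hinj k hkmem j₀ (Finset.mem_Icc.mpr hj₀) this
    omega
  have key : ∀ j, j₀ ≤ j → j ≤ n → r j + (j:ℤ) ≤ r j₀ + (j₀:ℤ) := by
    intro j
    induction j with
    | zero => intro h1 _; omega
    | succ m ih =>
      intro h1 h2
      rcases Nat.eq_or_lt_of_le h1 with he | hl
      · rw [he]
      · have hm : j₀ ≤ m := by omega
        have h3 := ih hm (by omega)
        have h4 := hr_anti m (Finset.mem_Icc.mpr (by omega)) (m+1)
          (Finset.mem_Icc.mpr (by omega)) (by omega)
        push_cast
        push_cast at h3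
        linarith
  intro j hj hjle
  rw [Finset.mem_Icc] at hj
  have hkey := key j hjle hj.2
  linarith
end

section
/- The Hasse polynomial H_k(x) = Σ_{τ∈S_k} u_τ ∏_{i=-m}^{-1} x_{-r_i - τ(i)} ∏_{i=1}^{n} x_{r_i - τ(i)}, where each u_τ is a p-adic unit, is a nonzero polynomial (since some monomial appears exactly once among the summands). -/
open scoped Classical

noncomputable section

/-- `r_i = n - d·{-(pi-n)/d} + d` for `i > 0` and `r_i = m - e·{(pi+m)/e} + e` for `i < 0`,
written with `d·{-(pi-n)/d} = (n - pi) mod d` and `e·{(pi+m)/e} = (pi + m) mod e`. -/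
def rfun (p d e m n : ℕ) (i : ℤ) : ℤ :=
  if 0 < i then (n : ℤ) - (((n : ℤ) - p * i) % d) + d
  else (m : ℤ) - (((p : ℤ) * i + m) % e) + e

/-- The index set `{-m, …, n}`. -/
abbrev IdxSet (m n : ℕ) : Finset ℤ := Finset.Icc (-(m : ℤ)) (n : ℤ)

/-- `S_k`: permutations `τ` of `{-m, …, n}` with `τ(0) = 0`, `τ(i) ≥ r_i - d` for `i > 0`
and `τ(i) ≤ -r_i + e` for `i < 0`. -/
def Sk (p d e m n : ℕ) : Finset (Equiv.Perm {x // x ∈ IdxSet m n}) :=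
  Finset.univ.filter fun τ =>
    (∀ i : {x // x ∈ IdxSet m n}, i.1 = 0 → (τ i).1 = 0) ∧
    (∀ i : {x // x ∈ IdxSet m n}, 0 < i.1 → rfun p d e m n i.1 - d ≤ (τ i).1) ∧
    (∀ i : {x // x ∈ IdxSet m n}, i.1 < 0 → (τ i).1 ≤ -(rfun p d e m n i.1) + e)

/-- The monomial `∏_{i=-m}^{-1} x_{-r_i-τ(i)} · ∏_{i=1}^{n} x_{r_i-τ(i)}` attached to `τ`,
as a polynomial in the variables `x_j`, `j ∈ ℤ`. -/
def monom (p d e m n : ℕ) (R : Type*) [CommRing R]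
    (τ : Equiv.Perm {x // x ∈ IdxSet m n}) : MvPolynomial ℤ R :=
  ∏ i : {x // x ∈ IdxSet m n},
    if 0 < i.1 then MvPolynomial.X (rfun p d e m n i.1 - (τ i).1)
    else if i.1 < 0 then MvPolynomial.X (-(rfun p d e m n i.1) - (τ i).1)
    else 1

/-! Let `F = signedR`: `F(i) = r_i` for `i > 0`, `F(i) = -r_i` for `i < 0`, `F(0) = 0`, so the
monomial of `τ` is `∏_{i ≠ 0} x_{F(i) - τ(i)}`. Coprimality of `p` with `d` and `e` makes `F` injective on
`{-m, …, n}`, and the permutation `τ₀` ranking the indices by their `F`-values lies in `S_k`.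
The monomial of `τ` determines `∑ (F(i) - τ(i))²`, hence `∑ F(i) τ(i)`, and by the equality case
of the rearrangement inequality `τ₀` is the only permutation at which `∑ F(i) τ(i)` is maximal.
Hence the monomial of `τ₀` has coefficient `u_{τ₀}`, a unit. -/

open Finset Function

lemma Monovary.lt_iff_lt {ι α β : Type*} [LinearOrder α] [LinearOrder β] {f : ι → α} {g : ι → β}
    (hf : Injective f) (hg : Injective g) (hfg : Monovary f g) {i j : ι} :
    g i < g j ↔ f i < f j := by
  refine ⟨fun h => (hfg h).lt_of_ne (hf.ne ?_), fun h => ?_⟩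
  · rintro rfl; exact lt_irrefl _ h
  · refine lt_of_le_of_ne (not_lt.1 fun h' => (hfg h').not_gt h) (hg.ne ?_)
    rintro rfl; exact lt_irrefl _ h

lemma Equiv.Perm.eq_of_lt_iff_lt {α : Type*} [LinearOrder α] [Finite α] {σ τ : Equiv.Perm α}
    (h : ∀ i j, σ i < σ j ↔ τ i < τ j) : σ = τ := by
  let e : α ≃o α :=
    { toEquiv := τ.symm.trans σ
      map_rel_iff' := fun {x y} => by
        simpa [not_lt] using (h (τ.symm y) (τ.symm x)).not }
  ext x
  simpa [e] using congrArg (fun f : α ≃o α => f (τ x)) (Subsingleton.elim e (OrderIso.refl α))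

lemma sum_mul_eq_of_sum_sq_sub_eq {ι : Type*} [Fintype ι] {f g : ι → ℤ} (σ τ : Equiv.Perm ι)
    (h : ∑ i, (f i - g (σ i)) ^ 2 = ∑ i, (f i - g (τ i)) ^ 2) :
    ∑ i, f i * g (σ i) = ∑ i, f i * g (τ i) := by
  have expand : ∀ π : Equiv.Perm ι,
      ∑ i, (f i - g (π i)) ^ 2 = ∑ i, f i ^ 2 - 2 * ∑ i, f i * g (π i) + ∑ i, g i ^ 2 := by
    intro π
    rw [← Equiv.sum_comp π (fun i => g i ^ 2), mul_sum, ← sum_sub_distrib, ← sum_add_distrib]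
    exact sum_congr rfl fun i _ => by ring
  rw [expand, expand] at h
  omega

section rankPerm

variable {a b : ℤ} {F : {x // x ∈ Icc a b} → ℤ}

lemma card_filter_lt_lt_card_filter_lt {i j : {x // x ∈ Icc a b}} (h : F i < F j) :
    #{k | F k < F i} < #{k | F k < F j} := by
  refine card_lt_card ((ssubset_iff_of_subset ?_).2 ⟨i, by simp [h], by simp⟩)
  intro k
  simp only [mem_filter, mem_univ, true_and]
  exact fun hk => hk.trans h

lemma add_card_filter_lt_mem_Icc (F : {x // x ∈ Icc a b} → ℤ) (i : {x // x ∈ Icc a b}) :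
    a + #{k | F k < F i} ∈ Icc a b := by
  have hlt : #{k | F k < F i} < Fintype.card {x // x ∈ Icc a b} :=
    card_lt_card (filter_ssubset.2 ⟨i, mem_univ _, lt_irrefl _⟩)
  rw [Fintype.card_coe, Int.card_Icc] at hlt
  rw [mem_Icc]
  omega

def rankFun (F : {x // x ∈ Icc a b} → ℤ) (i : {x // x ∈ Icc a b}) : {x // x ∈ Icc a b} :=
  ⟨a + #{k | F k < F i}, add_card_filter_lt_mem_Icc F i⟩

lemma rankFun_lt_rankFun {i j : {x // x ∈ Icc a b}} (h : F i < F j) :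
    rankFun F i < rankFun F j := by
  change a + _ < a + _
  have := card_filter_lt_lt_card_filter_lt h
  omega

lemma rankFun_lt_rankFun_iff (hF : Injective F) {i j : {x // x ∈ Icc a b}} :
    rankFun F i < rankFun F j ↔ F i < F j := by
  refine ⟨fun h => lt_of_not_ge fun hle => ?_, rankFun_lt_rankFun⟩
  rcases hle.eq_or_lt with heq | hlt
  · exact h.ne (congrArg _ (hF heq).symm)
  · exact (rankFun_lt_rankFun hlt).not_gt h

def rankPerm (F : {x // x ∈ Icc a b} → ℤ) (hF : Injective F) : Equiv.Perm {x // x ∈ Icc a b} :=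
  Equiv.ofBijective (rankFun F) <| Finite.injective_iff_bijective.mp fun i j h => by
    rcases lt_trichotomy (F i) (F j) with hlt | heq | hlt
    · exact absurd h (rankFun_lt_rankFun hlt).ne
    · exact hF heq
    · exact absurd h (rankFun_lt_rankFun hlt).ne'

lemma coe_rankPerm (hF : Injective F) (i : {x // x ∈ Icc a b}) :
    (rankPerm F hF i : ℤ) = a + #{k | F k < F i} := rfl

lemma rankPerm_lt_rankPerm_iff (hF : Injective F) {i j : {x // x ∈ Icc a b}} :
    rankPerm F hF i < rankPerm F hF j ↔ F i < F j :=
  rankFun_lt_rankFun_iff hF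

lemma eq_rankPerm_of_sum_mul_eq (hF : Injective F) (σ : Equiv.Perm {x // x ∈ Icc a b})
    (h : ∑ i, F i * (σ i : ℤ) = ∑ i, F i * (rankPerm F hF i : ℤ)) : σ = rankPerm F hF := by
  set ρ := rankPerm F hF
  have hmono : Monovary F fun i => (ρ i : ℤ) := fun i j hij =>
    ((rankPerm_lt_rankPerm_iff hF).1 (Subtype.coe_lt_coe.1 hij)).le
  have hσ : Monovary F fun i => (σ i : ℤ) := by
    have := (hmono.sum_mul_comp_perm_eq_sum_mul_iff (σ := ρ.symm * σ)).1
    simpa [comp_def] using this (by simpa using h)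
  refine Equiv.Perm.eq_of_lt_iff_lt fun i j => ?_
  rw [rankPerm_lt_rankPerm_iff hF, ← Subtype.coe_lt_coe]
  exact hσ.lt_iff_lt hF (Subtype.val_injective.comp σ.injective)

lemma add_sub_le_coe_rankPerm (hF : Injective F) {i : {x // x ∈ Icc a b}} {c : ℤ}
    (hc : ∀ k, F i ≤ F k → F k ≤ c) :
    F i + b - c ≤ rankPerm F hF i := by
  have hge : #{k | ¬F k < F i} ≤ #(Icc (F i) c) := by
    refine card_le_card_of_injOn F (fun k hk => ?_) hF.injOn
    simp only [coe_filter, mem_univ, true_and, not_lt, Set.mem_ofPred_eq] at hk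
    exact mem_Icc.2 ⟨hk, hc k hk⟩
  have hsplit := card_filter_add_card_filter_not (s := univ) fun k => F k < F i
  rw [card_univ, Fintype.card_coe, Int.card_Icc] at hsplit
  rw [Int.card_Icc] at hge
  rw [coe_rankPerm]
  have := hc i le_rfl
  omega

lemma coe_rankPerm_le_add_sub (hF : Injective F) {i : {x // x ∈ Icc a b}} {c : ℤ}
    (hci : c ≤ F i) (hc : ∀ k, F k < F i → c ≤ F k) :
    rankPerm F hF i ≤ a + F i - c := by
  have hlt : #{k | F k < F i} ≤ #(Ico c (F i)) := by
    refine card_le_card_of_injOn F (fun k hk => ?_) hF.injOn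
    simp only [coe_filter, mem_univ, true_and, Set.mem_ofPred_eq] at hk
    exact mem_Ico.2 ⟨hc k hk, hk⟩
  rw [Int.card_Ico] at hlt
  rw [coe_rankPerm]
  omega

lemma coe_rankPerm_eq_of_lt_iff (hF : Injective F) {i : {x // x ∈ Icc a b}} {x : ℤ}
    (hax : a ≤ x) (hxb : x ≤ b + 1) (h : ∀ k, F k < F i ↔ (k : ℤ) < x) : rankPerm F hF i = x := by
  have hcount : #{k | F k < F i} = #(Ico a x) := by
    rw [filter_congr fun k _ => h k]
    refine card_bij (fun k _ => k.1) (fun k hk => ?_) (fun _ _ _ _ => Subtype.ext) fun y hy => ?_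
    · simp only [mem_filter, mem_univ, true_and] at hk
      exact mem_Ico.2 ⟨(mem_Icc.1 k.2).1, hk⟩
    · obtain ⟨hay, hyx⟩ := mem_Ico.1 hy
      exact ⟨⟨y, mem_Icc.2 ⟨hay, by omega⟩⟩, by simpa using hyx, rfl⟩
  rw [coe_rankPerm, hcount, Int.card_Ico]
  omega

end rankPerm

lemma Int.eq_of_mul_add_emod_eq {a c d i j : ℤ} (had : IsCoprime a d) (hij : |i - j| < d)
    (h : (a * i + c) % d = (a * j + c) % d) : i = j := by
  have hdvd : d ∣ a * (j - i) := by
    have := Int.ModEq.dvd h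
    rwa [show a * j + c - (a * i + c) = a * (j - i) by ring] at this
  have := Int.eq_zero_of_abs_lt_dvd (had.symm.dvd_of_dvd_mul_left hdvd) (by rwa [abs_sub_comm])
  omega

def signedR (p d e m n : ℕ) (i : ℤ) : ℤ :=
  if 0 < i then rfun p d e m n i else if i < 0 then -rfun p d e m n i else 0

section signedR

variable {p d e m n : ℕ} {i : ℤ}

lemma signedR_of_pos (hi : 0 < i) : signedR p d e m n i = rfun p d e m n i := if_pos hi

lemma signedR_of_neg (hi : i < 0) : signedR p d e m n i = -rfun p d e m n i := by
  rw [signedR, if_neg hi.not_gt, if_pos hi]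

lemma signedR_zero : signedR p d e m n 0 = 0 := rfl

lemma signedR_bounds_of_pos (hd : 0 < d) (hi : 0 < i) :
    n + 1 ≤ signedR p d e m n i ∧ signedR p d e m n i ≤ n + d := by
  have := Int.emod_nonneg ((n : ℤ) - p * i) (by omega : (d : ℤ) ≠ 0)
  have := Int.emod_lt_of_pos ((n : ℤ) - p * i) (by omega : (0 : ℤ) < d)
  rw [signedR_of_pos hi, rfun, if_pos hi]
  omega

lemma signedR_bounds_of_neg (he : 0 < e) (hi : i < 0) :
    -(m + e : ℤ) ≤ signedR p d e m n i ∧ signedR p d e m n i ≤ -(m + 1 : ℤ) := by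
  have := Int.emod_nonneg ((p : ℤ) * i + m) (by omega : (e : ℤ) ≠ 0)
  have := Int.emod_lt_of_pos ((p : ℤ) * i + m) (by omega : (0 : ℤ) < e)
  rw [signedR_of_neg hi, rfun, if_neg hi.not_gt]
  omega

lemma signedR_pos_iff (hd : 0 < d) (he : 0 < e) : 0 < signedR p d e m n i ↔ 0 < i := by
  rcases lt_trichotomy i 0 with hi | rfl | hi
  · have := signedR_bounds_of_neg (p := p) (d := d) (m := m) (n := n) he hi; omega
  · simp [signedR_zero]
  · have := signedR_bounds_of_pos (p := p) (e := e) (m := m) (n := n) hd hi; omega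

lemma signedR_neg_iff (hd : 0 < d) (he : 0 < e) : signedR p d e m n i < 0 ↔ i < 0 := by
  rcases lt_trichotomy i 0 with hi | rfl | hi
  · have := signedR_bounds_of_neg (p := p) (d := d) (m := m) (n := n) he hi; omega
  · simp [signedR_zero]
  · have := signedR_bounds_of_pos (p := p) (e := e) (m := m) (n := n) hd hi; omega

lemma signedR_injOn (hd : 0 < d) (he : 0 < e) (hcd : Nat.Coprime p d) (hce : Nat.Coprime p e)
    (hm : m < e) (hn : n < d) : Set.InjOn (signedR p d e m n) (IdxSet m n) := by
  intro i hi j hj h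
  have hi' := mem_Icc.1 hi
  have hj' := mem_Icc.1 hj
  have hpos : 0 < i ↔ 0 < j := by
    rw [← signedR_pos_iff (p := p) (m := m) (n := n) hd he, h, signedR_pos_iff hd he]
  have hneg : i < 0 ↔ j < 0 := by
    rw [← signedR_neg_iff (p := p) (m := m) (n := n) hd he, h, signedR_neg_iff hd he]
  rcases lt_trichotomy i 0 with hi0 | hi0 | hi0
  · have hj0 := hneg.1 hi0
    rw [signedR_of_neg hi0, signedR_of_neg hj0, rfun, rfun, if_neg hi0.not_gt,
      if_neg hj0.not_gt] at h
    exact Int.eq_of_mul_add_emod_eq (c := m) (Nat.isCoprime_iff_coprime.2 hce)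
      (by rw [abs_lt]; omega) (by omega)
  · omega
  · have hj0 := hpos.1 hi0
    rw [signedR_of_pos hi0, signedR_of_pos hj0, rfun, rfun, if_pos hi0, if_pos hj0] at h
    refine Int.eq_of_mul_add_emod_eq (a := -p) (c := n)
      (Nat.isCoprime_iff_coprime.2 hcd).neg_left (by rw [abs_lt]; omega) ?_
    simp only [neg_mul, neg_add_eq_sub]
    omega

end signedR

lemma rankPerm_signedR_mem_Sk {p d e m n : ℕ} (hd : 0 < d) (he : 0 < e)
    (hF : Injective fun i : {x // x ∈ IdxSet m n} => signedR p d e m n i) :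
    rankPerm _ hF ∈ Sk p d e m n := by
  refine mem_filter.2 ⟨mem_univ _, fun i hi => ?_, fun i hi => ?_, fun i hi => ?_⟩
  · refine coe_rankPerm_eq_of_lt_iff hF (by omega) (by omega) fun k => ?_
    simp only [hi, signedR_zero]
    exact signedR_neg_iff hd he
  · have hFi := signedR_bounds_of_pos (p := p) (e := e) (m := m) (n := n) hd hi
    have := add_sub_le_coe_rankPerm hF (i := i) (c := n + d) fun k hk =>
      (signedR_bounds_of_pos hd ((signedR_pos_iff (p := p) (m := m) (n := n) (i := k) hd he).1
        (by omega))).2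
    rw [← signedR_of_pos hi]
    omega
  · have hFi := signedR_bounds_of_neg (p := p) (d := d) (m := m) (n := n) he hi
    have := coe_rankPerm_le_add_sub hF (i := i) (c := -(m + e)) hFi.1 fun k hk =>
      (signedR_bounds_of_neg he ((signedR_neg_iff (p := p) (m := m) (n := n) (i := k) hd he).1
        (by omega))).1
    rw [← neg_neg (rfun p d e m n i), ← signedR_of_neg hi]
    omega

lemma MvPolynomial.sum_C_mul_monomial_ne_zero {R σ ι : Type*} [CommSemiring R] {s : Finset ι}
    {c : ι → R} {f : ι → σ →₀ ℕ} {a : ι} (ha : a ∈ s) (hca : c a ≠ 0)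
    (hf : ∀ b ∈ s, f b = f a → b = a) :
    ∑ b ∈ s, C (c b) * monomial (f b) 1 ≠ 0 := by
  intro h
  apply hca
  have := congrArg (coeff (f a)) h
  rwa [coeff_sum, sum_eq_single_of_mem a ha fun b hb hba => ?_, coeff_C_mul, coeff_monomial,
    if_pos rfl, mul_one, coeff_zero] at this
  rw [coeff_C_mul, coeff_monomial, if_neg fun hfb => hba (hf b hb hfb), mul_zero]

def monomExponent (p d e m n : ℕ) (τ : Equiv.Perm {x // x ∈ IdxSet m n}) : ℤ →₀ ℕ :=
  ∑ i : {x // x ∈ IdxSet m n},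
    if (i : ℤ) = 0 then 0 else Finsupp.single (signedR p d e m n i - τ i) 1

section monomExponent

variable {p d e m n : ℕ}

lemma monom_eq_monomial (R : Type*) [CommRing R] (τ : Equiv.Perm {x // x ∈ IdxSet m n}) :
    monom p d e m n R τ = MvPolynomial.monomial (monomExponent p d e m n τ) 1 := by
  rw [monom, monomExponent, MvPolynomial.monomial_sum_one]
  refine prod_congr rfl fun i _ => ?_
  rcases lt_trichotomy (i : ℤ) 0 with hi | hi | hi
  · simp [hi, hi.ne, hi.not_gt, signedR_of_neg hi, MvPolynomial.X]
  · simp [hi]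
  · simp [hi, hi.ne', signedR_of_pos hi, MvPolynomial.X]

lemma weight_sq_monomExponent (τ : Equiv.Perm {x // x ∈ IdxSet m n})
    (hτ : ∀ i : {x // x ∈ IdxSet m n}, (i : ℤ) = 0 → (τ i : ℤ) = 0) :
    Finsupp.weight (fun j : ℤ => j ^ 2) (monomExponent p d e m n τ) =
      ∑ i : {x // x ∈ IdxSet m n}, (signedR p d e m n i - τ i) ^ 2 := by
  rw [monomExponent, map_sum]
  refine sum_congr rfl fun i _ => ?_
  by_cases hi : (i : ℤ) = 0
  · simp [hi, hτ i hi, signedR_zero]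
  · simp [hi, Finsupp.weight_single]

end monomExponent

/-- The Hasse polynomial `H_k = Σ_{τ ∈ S_k} u_τ · ∏ x_{-r_i-τ(i)} ∏ x_{r_i-τ(i)}`, where the
`u_τ` are `p`-adic units, is a nonzero polynomial. -/
theorem stmt15 (p d e m n : ℕ) [Fact p.Prime] (hd : 0 < d) (he : 0 < e)
    (hcd : Nat.Coprime p d) (hce : Nat.Coprime p e) (hm : m < e) (hn : n < d)
    (u : Equiv.Perm {x // x ∈ IdxSet m n} → ℤ_[p])
    (hu : ∀ τ ∈ Sk p d e m n, IsUnit (u τ)) :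
    ∑ τ ∈ Sk p d e m n, MvPolynomial.C (u τ) * monom p d e m n ℤ_[p] τ ≠ 0 := by
  have hF : Injective fun i : {x // x ∈ IdxSet m n} => signedR p d e m n i :=
    fun i j h => Subtype.ext (signedR_injOn hd he hcd hce hm hn i.2 j.2 h)
  have hτ₀ := rankPerm_signedR_mem_Sk hd he hF
  simp only [monom_eq_monomial]
  refine MvPolynomial.sum_C_mul_monomial_ne_zero hτ₀ (hu _ hτ₀).ne_zero fun τ hτ h => ?_
  refine eq_rankPerm_of_sum_mul_eq hF τ (sum_mul_eq_of_sum_sq_sub_eq (g := Subtype.val) τ _ ?_)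
  rw [← weight_sq_monomExponent τ (mem_filter.1 hτ).2.1, h,
    weight_sq_monomExponent _ (mem_filter.1 hτ₀).2.1]
end
end
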